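/- arXiv:2212.12373 — 6 statements merged into one kernel-verified Lean document; each statement's English description precedes it below -/
import Mathlib

section
/- Let 0 < α ≤ 1, q ≥ 2, and let μ be an α-dimensional measure on ℝ, i.e. μ(B(x,ρ)) ≤ C_μ ρ^α for all x ∈ ℝ and ρ > 0. Then for any interval [a,b] ⊂ ℝ and any g ∈ L^{q'}(dμ) (with 1/q + 1/q' = 1), the convolution-type operator satisfies ‖ ∫ g(x') χ_{[a,b]}(x − x') dμ(x') ‖_{L^q(dμ)} ≤ C (b−a)^{2α/q} ‖g‖_{L^{q'}(dμ)}, where C depends only on C_μ, α, q. -/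
/-!
The kernel `K x y = χ_[a,b] (x - y)` takes values in `[0, 1]`, and its integrals in either variable
are `μ`-measures of intervals of length `b - a`, hence at most `M = Cμ (b - a) ^ α`.
Let `Tg x = ∫ g y K x y dμ(y)` and `1/p + 1/q = 1`, `q ≥ 2`. Since `K ≤ K^(2/q)`,
`|g| K ≤ (|g|^p K)^(1/q) · K^(1/q) · (|g|^p)^(1 - 2/q)`, and Hölder with exponents
`1/q, 1/q, 1 - 2/q` gives `|Tg x|^q ≤ M ‖g‖_p^(p(q-2)) ∫ |g y|^p K x y dμ(y)`. Integrating in `x`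
and exchanging the integrals yields `‖Tg‖_q^q ≤ M² ‖g‖_p^(p(q-1))`, i.e. `‖Tg‖_q ≤ M^(2/q) ‖g‖_p`.
-/

open MeasureTheory Set Function
open scoped ENNReal

section KernelBound

variable {X Y : Type*} [MeasurableSpace X] [MeasurableSpace Y] {μ : Measure X} {ν : Measure Y}
  {p q : ℝ}

theorem lintegral_mul_rpow_three_le {f g h : Y → ℝ≥0∞} (hf : AEMeasurable f ν)
    (hg : AEMeasurable g ν) (hh : AEMeasurable h ν) {a b c : ℝ} (ha : 0 ≤ a) (hb : 0 ≤ b)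
    (hc : 0 ≤ c) (habc : a + b + c = 1) :
    ∫⁻ y, f y ^ a * g y ^ b * h y ^ c ∂ν ≤
      (∫⁻ y, f y ∂ν) ^ a * (∫⁻ y, g y ∂ν) ^ b * (∫⁻ y, h y ∂ν) ^ c := by
  have := ENNReal.lintegral_prod_norm_pow_le (μ := ν) Finset.univ (f := ![f, g, h])
    (p := ![a, b, c]) (fun i _ => by fin_cases i <;> assumption)
    (by simpa [Fin.sum_univ_three] using habc) (fun i _ => by fin_cases i <;> assumption)
  simpa [Fin.prod_univ_three] using this

theorem ENNReal.mul_le_rpow_mul_rpow_mul_rpow (hpq : p.HolderConjugate q) (hq : 2 ≤ q)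
    (G : ℝ≥0∞) {K : ℝ≥0∞} (hK : K ≤ 1) :
    G * K ≤ (G ^ p * K) ^ (1 / q) * K ^ (1 / q) * (G ^ p) ^ (1 - 2 / q) := by
  have hq0 : 0 < q := by linarith
  have hp0 : 0 < p := hpq.pos
  have h2q : 0 ≤ 1 - 2 / q := by rw [sub_nonneg, div_le_one hq0]; exact hq
  have hexp : p * (1 / q) + p * (1 - 2 / q) = 1 := by
    have := hpq.inv_add_inv_eq_one
    field_simp at this ⊢
    linarith
  have hG : G = (G ^ p) ^ (1 / q) * (G ^ p) ^ (1 - 2 / q) := by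
    rw [← ENNReal.rpow_mul, ← ENNReal.rpow_mul,
      ← ENNReal.rpow_add_of_nonneg _ _ (by positivity) (mul_nonneg hp0.le h2q), hexp,
      ENNReal.rpow_one]
  have hK' : K ≤ K ^ (1 / q) * K ^ (1 / q) := by
    rw [← ENNReal.rpow_add_of_nonneg _ _ (by positivity) (by positivity)]
    conv_lhs => rw [← ENNReal.rpow_one K]
    exact ENNReal.rpow_le_rpow_of_exponent_ge hK (by rw [← add_div, div_le_one hq0]; linarith)
  calc G * K ≤ G * (K ^ (1 / q) * K ^ (1 / q)) := by gcongr
    _ = (G ^ p * K) ^ (1 / q) * K ^ (1 / q) * (G ^ p) ^ (1 - 2 / q) := by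
        rw [ENNReal.mul_rpow_of_nonneg _ _ (by positivity)]
        nth_rw 1 [hG]
        ring

theorem lintegral_mul_le_of_le_one (hpq : p.HolderConjugate q) (hq : 2 ≤ q) {G k : Y → ℝ≥0∞}
    (hG : AEMeasurable G ν) (hk : AEMeasurable k ν) (hk1 : ∀ y, k y ≤ 1) :
    ∫⁻ y, G y * k y ∂ν ≤ (∫⁻ y, G y ^ p * k y ∂ν) ^ (1 / q) * (∫⁻ y, k y ∂ν) ^ (1 / q) *
      (∫⁻ y, G y ^ p ∂ν) ^ (1 - 2 / q) := by
  have hq0 : 0 < q := by linarith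
  refine (lintegral_mono fun y =>
    ENNReal.mul_le_rpow_mul_rpow_mul_rpow hpq hq (G y) (hk1 y)).trans ?_
  refine lintegral_mul_rpow_three_le ((hG.pow_const p).mul hk) hk (hG.pow_const p)
    (by positivity) (by positivity) ?_ (by ring)
  rw [sub_nonneg, div_le_one hq0]; exact hq

theorem lintegral_lintegral_mul_kernel_le [SFinite μ] [SFinite ν] {F : Y → ℝ≥0∞}
    (hF : AEMeasurable F ν) {K : X → Y → ℝ≥0∞} (hK : Measurable (uncurry K)) {M : ℝ≥0∞}
    (hcol : ∀ y, ∫⁻ x, K x y ∂μ ≤ M) :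
    ∫⁻ x, ∫⁻ y, F y * K x y ∂ν ∂μ ≤ M * ∫⁻ y, F y ∂ν := by
  rw [lintegral_lintegral_swap (hF.comp_snd.mul hK.aemeasurable)]
  calc ∫⁻ y, ∫⁻ x, F y * K x y ∂μ ∂ν = ∫⁻ y, F y * ∫⁻ x, K x y ∂μ ∂ν :=
        lintegral_congr fun y => lintegral_const_mul _ hK.of_uncurry_right
    _ ≤ ∫⁻ y, F y * M ∂ν := by gcongr with y; exact hcol y
    _ = M * ∫⁻ y, F y ∂ν := by rw [lintegral_mul_const'' _ hF, mul_comm]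

theorem lintegral_rpow_lintegral_mul_kernel_le [SFinite μ] [SFinite ν] (hpq : p.HolderConjugate q)
    (hq : 2 ≤ q) {G : Y → ℝ≥0∞} (hG : AEMeasurable G ν) {K : X → Y → ℝ≥0∞}
    (hK : Measurable (uncurry K)) (hK1 : ∀ x y, K x y ≤ 1) {M : ℝ≥0∞}
    (hrow : ∀ x, ∫⁻ y, K x y ∂ν ≤ M) (hcol : ∀ y, ∫⁻ x, K x y ∂μ ≤ M) :
    ∫⁻ x, (∫⁻ y, G y * K x y ∂ν) ^ q ∂μ ≤ M ^ 2 * (∫⁻ y, G y ^ p ∂ν) ^ (q - 1) := by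
  have hq0 : 0 < q := by linarith
  set J := ∫⁻ y, G y ^ p ∂ν
  have hslice (x : X) :
      (∫⁻ y, G y * K x y ∂ν) ^ q ≤ (∫⁻ y, G y ^ p * K x y ∂ν) * (M * J ^ (q - 2)) := by
    calc (∫⁻ y, G y * K x y ∂ν) ^ q
        ≤ ((∫⁻ y, G y ^ p * K x y ∂ν) ^ (1 / q) * M ^ (1 / q) * J ^ (1 - 2 / q)) ^ q := by
          gcongr
          refine (lintegral_mul_le_of_le_one hpq hq hG hK.of_uncurry_left.aemeasurable
            (hK1 x)).trans ?_
          gcongr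
          exact hrow x
      _ = (∫⁻ y, G y ^ p * K x y ∂ν) * (M * J ^ (q - 2)) := by
          rw [ENNReal.mul_rpow_of_nonneg _ _ hq0.le, ENNReal.mul_rpow_of_nonneg _ _ hq0.le,
            ← ENNReal.rpow_mul, ← ENNReal.rpow_mul, ← ENNReal.rpow_mul, one_div_mul_cancel hq0.ne',
            sub_mul, div_mul_cancel₀ _ hq0.ne', one_mul, ENNReal.rpow_one, ENNReal.rpow_one,
            mul_assoc]
  calc ∫⁻ x, (∫⁻ y, G y * K x y ∂ν) ^ q ∂μ
      ≤ ∫⁻ x, (∫⁻ y, G y ^ p * K x y ∂ν) * (M * J ^ (q - 2)) ∂μ := lintegral_mono hslice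
    _ = (∫⁻ x, ∫⁻ y, G y ^ p * K x y ∂ν ∂μ) * (M * J ^ (q - 2)) :=
        lintegral_mul_const'' _
          ((hG.pow_const p).comp_snd.mul hK.aemeasurable).lintegral_prod_right'
    _ ≤ (M * J) * (M * J ^ (q - 2)) := by
        gcongr
        exact lintegral_lintegral_mul_kernel_le (hG.pow_const p) hK hcol
    _ = M ^ 2 * J ^ (q - 1) := by
        rw [mul_mul_mul_comm, ← pow_two]
        congr 1
        rw [show q - 1 = 1 + (q - 2) by ring,
          ENNReal.rpow_add_of_nonneg _ _ zero_le_one (by linarith), ENNReal.rpow_one]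

theorem eLpNorm_integral_mul_kernel_le {𝕜 : Type*} [RCLike 𝕜] [SFinite μ] [SFinite ν]
    (hpq : p.HolderConjugate q) (hq : 2 ≤ q) {g : Y → 𝕜} (hg : AEStronglyMeasurable g ν)
    {K : X → Y → 𝕜} (hK : Measurable (uncurry K)) (hK1 : ∀ x y, ‖K x y‖ ≤ 1) {M : ℝ≥0∞}
    (hrow : ∀ x, ∫⁻ y, ‖K x y‖ₑ ∂ν ≤ M) (hcol : ∀ y, ∫⁻ x, ‖K x y‖ₑ ∂μ ≤ M) :
    eLpNorm (fun x => ∫ y, g y * K x y ∂ν) (ENNReal.ofReal q) μ ≤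
      M ^ (2 / q) * eLpNorm g (ENNReal.ofReal p) ν := by
  have hq0 : 0 < q := by linarith
  have hp0 : 0 < p := hpq.pos
  have hexp : (q - 1) * (1 / q) = 1 / p := by
    have := hpq.inv_add_inv_eq_one
    field_simp at this ⊢
    linarith
  rw [eLpNorm_eq_lintegral_rpow_enorm_toReal (by simpa using hq0) ENNReal.ofReal_ne_top,
    eLpNorm_eq_lintegral_rpow_enorm_toReal (by simpa using hp0) ENNReal.ofReal_ne_top,
    ENNReal.toReal_ofReal hq0.le, ENNReal.toReal_ofReal hp0.le]
  calc (∫⁻ x, ‖∫ y, g y * K x y ∂ν‖ₑ ^ q ∂μ) ^ (1 / q)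
      ≤ (∫⁻ x, (∫⁻ y, ‖g y‖ₑ * ‖K x y‖ₑ ∂ν) ^ q ∂μ) ^ (1 / q) := by
        gcongr with x
        simpa only [enorm_mul] using enorm_integral_le_lintegral_enorm (fun y => g y * K x y)
    _ ≤ (M ^ 2 * (∫⁻ y, ‖g y‖ₑ ^ p ∂ν) ^ (q - 1)) ^ (1 / q) := by
        gcongr
        exact lintegral_rpow_lintegral_mul_kernel_le hpq hq hg.enorm hK.enorm
          (fun x y => by simpa [← ofReal_norm] using hK1 x y) hrow hcol
    _ = M ^ (2 / q) * (∫⁻ y, ‖g y‖ₑ ^ p ∂ν) ^ (1 / p) := by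
        rw [ENNReal.mul_rpow_of_nonneg _ _ (by positivity), ← ENNReal.rpow_natCast_mul,
          ← ENNReal.rpow_mul, hexp]
        norm_num [div_eq_mul_inv]

end KernelBound

section BallGrowth

variable {X : Type*} [PseudoMetricSpace X] [MeasurableSpace X] {μ : Measure X} {α : ℝ}
  {C : ℝ≥0∞}

theorem isLocallyFiniteMeasure_of_measure_ball_le (hC : C ≠ ⊤)
    (hμ : ∀ (x : X) (ρ : ℝ), 0 < ρ → μ (Metric.ball x ρ) ≤ C * ENNReal.ofReal (ρ ^ α)) :
    IsLocallyFiniteMeasure μ :=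
  ⟨fun x => ⟨Metric.ball x 1, Metric.ball_mem_nhds x one_pos,
    (hμ x 1 one_pos).trans_lt (ENNReal.mul_lt_top hC.lt_top ENNReal.ofReal_lt_top)⟩⟩

theorem measure_closedBall_le_of_measure_ball_le (hα : 0 ≤ α) (hC : C ≠ ⊤)
    (hμ : ∀ (x : X) (ρ : ℝ), 0 < ρ → μ (Metric.ball x ρ) ≤ C * ENNReal.ofReal (ρ ^ α))
    (x : X) {r : ℝ} (hr : 0 ≤ r) :
    μ (Metric.closedBall x r) ≤ C * ENNReal.ofReal (r ^ α) := by
  have hcont : Filter.Tendsto (fun ρ : ℝ => C * ENNReal.ofReal (ρ ^ α)) (nhdsWithin r (Ioi r))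
      (nhds (C * ENNReal.ofReal (r ^ α))) :=
    ENNReal.Tendsto.const_mul ((ENNReal.continuous_ofReal.tendsto _).comp
      ((Real.continuousAt_rpow_const r α (Or.inr hα)).tendsto.mono_left nhdsWithin_le_nhds))
      (Or.inr hC)
  refine ge_of_tendsto hcont ?_
  filter_upwards [self_mem_nhdsWithin] with ρ hρ
  exact (measure_mono (Metric.closedBall_subset_ball hρ)).trans (hμ x ρ (hr.trans_lt hρ))

theorem Real.measure_Icc_le_of_measure_ball_le {μ : Measure ℝ} (hα : 0 ≤ α) (hC : C ≠ ⊤)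
    (hμ : ∀ (x : ℝ) (ρ : ℝ), 0 < ρ → μ (Metric.ball x ρ) ≤ C * ENNReal.ofReal (ρ ^ α))
    {c d : ℝ} (hcd : c ≤ d) :
    μ (Icc c d) ≤ C * ENNReal.ofReal ((d - c) ^ α) := by
  have hdc : 0 ≤ d - c := sub_nonneg.2 hcd
  rw [Real.Icc_eq_closedBall]
  refine (measure_closedBall_le_of_measure_ball_le hα hC hμ _ (by positivity)).trans ?_
  gcongr
  linarith

end BallGrowth

theorem lintegral_enorm_indicator_one_comp {Z : Type*} [MeasurableSpace Z] {μ : Measure Z}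
    {f : Z → ℝ} (hf : Measurable f) {s : Set ℝ} (hs : MeasurableSet s) :
    ∫⁻ z, ‖s.indicator (fun _ => (1 : ℝ)) (f z)‖ₑ ∂μ = μ (f ⁻¹' s) := by
  simp only [enorm_indicator_eq_indicator_enorm, enorm_one, ← indicator_comp_right f,
    Function.comp_def]
  exact lintegral_indicator_one (hf hs)

theorem young_type_fractal_general (α q : ℝ) (hα0 : 0 < α) (hq : 2 ≤ q)
    (μ : Measure ℝ) (Cμ : ℝ≥0∞) (hCμ : Cμ ≠ ⊤)
    (hμ : ∀ (x : ℝ) (ρ : ℝ), 0 < ρ → μ (Metric.ball x ρ) ≤ Cμ * ENNReal.ofReal (ρ ^ α)) :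
    ∃ C : ℝ≥0∞, C ≠ ⊤ ∧ ∀ (a b : ℝ), a ≤ b → ∀ g : ℝ → ℝ,
      MemLp g (ENNReal.ofReal (q / (q - 1))) μ →
      eLpNorm (fun x => ∫ x', g x' * Set.indicator (Set.Icc a b) (fun _ => (1:ℝ)) (x - x') ∂μ)
          (ENNReal.ofReal q) μ ≤
        C * ENNReal.ofReal ((b - a) ^ (2 * α / q)) *
          eLpNorm g (ENNReal.ofReal (q / (q - 1))) μ := by
  have := isLocallyFiniteMeasure_of_measure_ball_le hCμ hμ
  have hq0 : 0 < q := by linarith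
  have hpq : (q / (q - 1)).HolderConjugate q :=
    (Real.HolderConjugate.conjExponent (by linarith)).symm
  refine ⟨Cμ ^ (2 / q), ENNReal.rpow_ne_top_of_nonneg (by positivity) hCμ, fun a b hab g hg => ?_⟩
  set K : ℝ → ℝ → ℝ := fun x y => (Icc a b).indicator (fun _ => 1) (x - y)
  have hK : Measurable (uncurry K) :=
    (measurable_const.indicator measurableSet_Icc).comp (measurable_fst.sub measurable_snd)
  have hIcc {c d : ℝ} (h : d - c = b - a) : μ (Icc c d) ≤ Cμ * ENNReal.ofReal ((b - a) ^ α) :=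
    h ▸ Real.measure_Icc_le_of_measure_ball_le hα0.le hCμ hμ (by linarith)
  have hrow (x : ℝ) : ∫⁻ y, ‖K x y‖ₑ ∂μ ≤ Cμ * ENNReal.ofReal ((b - a) ^ α) := by
    rw [lintegral_enorm_indicator_one_comp (f := fun y => x - y)
      (measurable_const.sub measurable_id) measurableSet_Icc, preimage_const_sub_Icc]
    exact hIcc (by ring)
  have hcol (y : ℝ) : ∫⁻ x, ‖K x y‖ₑ ∂μ ≤ Cμ * ENNReal.ofReal ((b - a) ^ α) := by
    rw [lintegral_enorm_indicator_one_comp (f := fun x => x - y)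
      (measurable_id.sub measurable_const) measurableSet_Icc, preimage_sub_const_Icc]
    exact hIcc (by ring)
  calc _ ≤ (Cμ * ENNReal.ofReal ((b - a) ^ α)) ^ (2 / q) *
        eLpNorm g (ENNReal.ofReal (q / (q - 1))) μ :=
        eLpNorm_integral_mul_kernel_le hpq hq hg.1 hK
          (fun _ _ => (norm_indicator_le_norm_self _ _).trans_eq norm_one) hrow hcol
    _ = Cμ ^ (2 / q) * ENNReal.ofReal ((b - a) ^ (2 * α / q)) *
        eLpNorm g (ENNReal.ofReal (q / (q - 1))) μ := by
        rw [ENNReal.mul_rpow_of_nonneg _ _ (by positivity),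
          ENNReal.ofReal_rpow_of_nonneg (by positivity) (by positivity),
          ← Real.rpow_mul (by linarith), mul_div_assoc', mul_comm α]

theorem young_type_fractal (α q : ℝ) (hα0 : 0 < α) (hα1 : α ≤ 1) (hq : 2 ≤ q)
    (μ : Measure ℝ) (Cμ : ℝ≥0∞) (hCμ : Cμ ≠ ⊤)
    (hμ : ∀ (x : ℝ) (ρ : ℝ), 0 < ρ → μ (Metric.ball x ρ) ≤ Cμ * ENNReal.ofReal (ρ ^ α)) :
    ∃ C : ℝ≥0∞, C ≠ ⊤ ∧ ∀ (a b : ℝ), a ≤ b → ∀ g : ℝ → ℝ,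
      MemLp g (ENNReal.ofReal (q / (q - 1))) μ →
      eLpNorm (fun x => ∫ x', g x' * Set.indicator (Set.Icc a b) (fun _ => (1:ℝ)) (x - x') ∂μ)
          (ENNReal.ofReal q) μ ≤
        C * ENNReal.ofReal ((b - a) ^ (2 * α / q)) *
          eLpNorm g (ENNReal.ofReal (q / (q - 1))) μ :=
  young_type_fractal_general α q hα0 hq μ Cμ hCμ hμ
end

section
/- Let 0 < α ≤ 1, q ≥ 2, and let μ be an α-dimensional measure on ℝ. If 0 < qρ/2 < α, then there is a constant C such that for all nonnegative G, H ∈ L^{q'}(dμ) supported in [−1,1], ∬_{[−1,1]²} G(x) H(x') |x−x'|^{−ρ} dμ(x) dμ(x') ≤ C ‖G‖_{L^{q'}(dμ)} ‖H‖_{L^{q'}(dμ)}, where 1/q + 1/q' = 1. -/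
/-!
For `0 < t ≤ 2` pick `n` with `2⁻ⁿ < t ≤ 2¹⁻ⁿ`; then `t^(-ρ) ≤ 2^(nρ)`, so the kernel is
dominated by `∑ₙ 2^(nρ) 1[|x - y| ≤ 2¹⁻ⁿ]`. At a scale `δ`, cut `ℝ` into cells of length `δ`:
points at distance `≤ δ` lie in the same or adjacent cells, Hölder on a cell `I` gives
`∫_I f ≤ ‖f‖_{L^r(I)} μ(I)^(1/q)` with `μ(I) ≤ Cμ δ^α`, and Hölder in `ℓ^r × ℓ^q` together with
`ℓ^r ⊆ ℓ^q` (as `r = q' ≤ q`) sums the cells to `3 (Cμ δ^α)^(2/q) ‖f‖_r ‖g‖_r`. The scales then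
form a geometric series of ratio `2^(ρ - 2α/q) < 1`.
-/

open MeasureTheory Set Metric
open scoped ENNReal Function

theorem ENNReal.tsum_rpow_le_rpow_tsum {ι : Type*} (x : ι → ℝ≥0∞) {s : ℝ} (hs : 1 ≤ s) :
    ∑' i, x i ^ s ≤ (∑' i, x i) ^ s := by
  have hs' : 0 ≤ s - 1 := by linarith
  have hsplit (a : ℝ≥0∞) : a ^ s = a * a ^ (s - 1) := by
    conv_lhs => rw [show s = 1 + (s - 1) by ring]
    rw [ENNReal.rpow_add_of_nonneg _ _ zero_le_one hs', ENNReal.rpow_one]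
  calc ∑' i, x i ^ s = ∑' i, x i * x i ^ (s - 1) := by simp only [hsplit]
    _ ≤ ∑' i, x i * (∑' j, x j) ^ (s - 1) := by
        gcongr with i
        exact ENNReal.le_tsum i
    _ = (∑' i, x i) ^ s := by rw [ENNReal.tsum_mul_right, hsplit]

theorem ENNReal.tsum_mul_le_Lp_mul_Lp {ι : Type*} {r q : ℝ} (hrq : r.HolderConjugate q)
    (hle : r ≤ q) (a b : ι → ℝ≥0∞) :
    ∑' i, a i * b i ≤ (∑' i, a i ^ r) ^ (1 / r) * (∑' i, b i ^ r) ^ (1 / r) := by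
  let _ : MeasurableSpace ι := ⊤
  have holder := ENNReal.lintegral_mul_le_Lp_mul_Lq Measure.count hrq
    (measurable_from_top (f := a)).aemeasurable (measurable_from_top (f := b)).aemeasurable
  simp only [lintegral_count, Pi.mul_apply] at holder
  refine holder.trans (mul_le_mul_right ?_ _)
  have hqr : 1 ≤ q / r := (one_le_div hrq.pos).mpr hle
  calc (∑' i, b i ^ q) ^ (1 / q) = (∑' i, (b i ^ r) ^ (q / r)) ^ (1 / q) := by
        simp only [← ENNReal.rpow_mul, mul_div_cancel₀ q hrq.ne_zero]
    _ ≤ ((∑' i, b i ^ r) ^ (q / r)) ^ (1 / q) :=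
        ENNReal.rpow_le_rpow (ENNReal.tsum_rpow_le_rpow_tsum _ hqr) hrq.symm.one_div_nonneg
    _ = (∑' i, b i ^ r) ^ (1 / r) := by
        rw [← ENNReal.rpow_mul]
        congr 1
        field_simp [hrq.ne_zero, hrq.symm.ne_zero]

theorem setLIntegral_le_Lp_mul_measure_rpow {α : Type*} [MeasurableSpace α] (μ : Measure α)
    {r q : ℝ} (hrq : r.HolderConjugate q) {f : α → ℝ≥0∞} (s : Set α)
    (hf : AEMeasurable f (μ.restrict s)) :
    ∫⁻ x in s, f x ∂μ ≤ (∫⁻ x in s, f x ^ r ∂μ) ^ (1 / r) * μ s ^ (1 / q) := by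
  simpa [ENNReal.one_rpow] using
    ENNReal.lintegral_mul_le_Lp_mul_Lq (μ.restrict s) hrq hf aemeasurable_const (g := 1)

def gridCell (δ : ℝ) (k : ℤ) : Set ℝ := Ico (k * δ) ((k + 1) * δ)

section gridCell

variable {δ : ℝ}

theorem measurableSet_gridCell (δ : ℝ) (k : ℤ) : MeasurableSet (gridCell δ k) :=
  measurableSet_Ico

theorem mem_gridCell_iff (hδ : 0 < δ) {x : ℝ} {k : ℤ} : x ∈ gridCell δ k ↔ ⌊x / δ⌋ = k := by
  rw [gridCell, mem_Ico, Int.floor_eq_iff, le_div_iff₀ hδ, div_lt_iff₀ hδ]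

theorem pairwise_disjoint_gridCell (hδ : 0 < δ) : Pairwise (Disjoint on gridCell δ) :=
  fun _ _ hkl => disjoint_left.mpr fun _ hk hl =>
    hkl (((mem_gridCell_iff hδ).mp hk).symm.trans ((mem_gridCell_iff hδ).mp hl))

theorem iUnion_gridCell (hδ : 0 < δ) : ⋃ k, gridCell δ k = univ :=
  eq_univ_of_forall fun _ => mem_iUnion.mpr ⟨_, (mem_gridCell_iff hδ).mpr rfl⟩

theorem gridCell_subset_ball (hδ : 0 < δ) (k : ℤ) : gridCell δ k ⊆ ball ((k + 1 / 2) * δ) δ := by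
  intro x hx
  rw [gridCell, mem_Ico] at hx
  rw [Real.ball_eq_Ioo, mem_Ioo]
  constructor <;> nlinarith

theorem closedBall_subset_gridCell_union (hδ : 0 < δ) {x : ℝ} {k : ℤ} (hx : x ∈ gridCell δ k) :
    closedBall x δ ⊆ gridCell δ (k - 1) ∪ gridCell δ k ∪ gridCell δ (k + 1) := by
  intro y hy
  rw [Real.closedBall_eq_Icc, mem_Icc] at hy
  rw [gridCell, mem_Ico] at hx
  have hk : ⌊y / δ⌋ = k - 1 ∨ ⌊y / δ⌋ = k ∨ ⌊y / δ⌋ = k + 1 := by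
    have h1 : ((k : ℝ) - 1) < ⌊y / δ⌋ + 1 := by
      have := Int.lt_floor_add_one (y / δ)
      have : (k - 1 : ℝ) ≤ y / δ := by rw [le_div_iff₀ hδ]; linarith
      linarith
    have h2 : (⌊y / δ⌋ : ℝ) < k + 2 := by
      have := Int.floor_le (y / δ)
      have : y / δ < k + 2 := by rw [div_lt_iff₀ hδ]; linarith
      linarith
    have h1' : k - 1 < ⌊y / δ⌋ + 1 := by exact_mod_cast h1
    have h2' : ⌊y / δ⌋ < k + 2 := by exact_mod_cast h2
    omega
  simp only [mem_union, mem_gridCell_iff hδ]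
  tauto

theorem lintegral_eq_tsum_gridCell (hδ : 0 < δ) (μ : Measure ℝ) (f : ℝ → ℝ≥0∞) :
    ∫⁻ x, f x ∂μ = ∑' k, ∫⁻ x in gridCell δ k, f x ∂μ := by
  rw [← lintegral_iUnion (measurableSet_gridCell δ) (pairwise_disjoint_gridCell hδ),
    iUnion_gridCell hδ, Measure.restrict_univ]

end gridCell

theorem tsum_setLIntegral_rpow_le {α ι : Type*} [MeasurableSpace α] [Countable ι] (μ : Measure α)
    {s : ι → Set α} (hs : ∀ i, MeasurableSet (s i)) (hd : Pairwise (Disjoint on s))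
    {r : ℝ} (hr : r ≠ 0) (f : α → ℝ≥0∞) :
    ∑' i, ((∫⁻ x in s i, f x ^ r ∂μ) ^ (1 / r)) ^ r ≤ ∫⁻ x, f x ^ r ∂μ := by
  simp only [← ENNReal.rpow_mul, one_div_mul_cancel hr, ENNReal.rpow_one]
  rw [← lintegral_iUnion hs hd]
  exact setLIntegral_le_lintegral _ _

theorem tsum_setLIntegral_mul_setLIntegral_le {α ι : Type*} [MeasurableSpace α] [Countable ι]
    (μ : Measure α) {r q : ℝ} (hrq : r.HolderConjugate q) (hle : r ≤ q)
    {s : ι → Set α} (hs : ∀ i, MeasurableSet (s i)) (hd : Pairwise (Disjoint on s))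
    {M : ℝ≥0∞} (hM : ∀ i, μ (s i) ≤ M) (e : ι ≃ ι)
    {f g : α → ℝ≥0∞} (hf : AEMeasurable f μ) (hg : AEMeasurable g μ) :
    ∑' i, (∫⁻ x in s i, f x ∂μ) * ∫⁻ y in s (e i), g y ∂μ ≤
      M ^ (2 / q) * ((∫⁻ x, f x ^ r ∂μ) ^ (1 / r) * (∫⁻ x, g x ^ r ∂μ) ^ (1 / r)) := by
  set F : ι → ℝ≥0∞ := fun i => (∫⁻ x in s i, f x ^ r ∂μ) ^ (1 / r)
  set G : ι → ℝ≥0∞ := fun i => (∫⁻ x in s i, g x ^ r ∂μ) ^ (1 / r)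
  have hcell {h : α → ℝ≥0∞} (hh : AEMeasurable h μ) (i : ι) :
      ∫⁻ x in s i, h x ∂μ ≤ (∫⁻ x in s i, h x ^ r ∂μ) ^ (1 / r) * M ^ (1 / q) :=
    (setLIntegral_le_Lp_mul_measure_rpow μ hrq _ hh.restrict).trans
      (mul_le_mul_right (ENNReal.rpow_le_rpow (hM i) hrq.symm.one_div_nonneg) _)
  have hM2 : M ^ (1 / q) * M ^ (1 / q) = M ^ (2 / q) := by
    rw [← ENNReal.rpow_add_of_nonneg _ _ hrq.symm.one_div_nonneg hrq.symm.one_div_nonneg]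
    ring_nf
  calc ∑' i, (∫⁻ x in s i, f x ∂μ) * ∫⁻ y in s (e i), g y ∂μ
      ≤ ∑' i, (F i * M ^ (1 / q)) * (G (e i) * M ^ (1 / q)) :=
        ENNReal.tsum_le_tsum fun i => mul_le_mul' (hcell hf i) (hcell hg (e i))
    _ = M ^ (2 / q) * ∑' i, F i * G (e i) := by
        rw [← ENNReal.tsum_mul_left, ← hM2]
        exact tsum_congr fun i => by ring
    _ ≤ M ^ (2 / q) * ((∑' i, F i ^ r) ^ (1 / r) * (∑' i, G (e i) ^ r) ^ (1 / r)) :=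
        mul_le_mul_right (ENNReal.tsum_mul_le_Lp_mul_Lp hrq hle _ _) _
    _ ≤ M ^ (2 / q) * ((∫⁻ x, f x ^ r ∂μ) ^ (1 / r) * (∫⁻ x, g x ^ r ∂μ) ^ (1 / r)) := by
        rw [e.tsum_eq (fun i => G i ^ r)]
        have hr := hrq.one_div_nonneg
        exact mul_le_mul_right (mul_le_mul'
          (ENNReal.rpow_le_rpow (tsum_setLIntegral_rpow_le μ hs hd hrq.ne_zero f) hr)
          (ENNReal.rpow_le_rpow (tsum_setLIntegral_rpow_le μ hs hd hrq.ne_zero g) hr)) _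

theorem lintegral_mul_setLIntegral_closedBall_le (μ : Measure ℝ) {r q : ℝ}
    (hrq : r.HolderConjugate q) (hle : r ≤ q) {δ : ℝ} (hδ : 0 < δ) {M : ℝ≥0∞}
    (hM : ∀ k, μ (gridCell δ k) ≤ M) {f g : ℝ → ℝ≥0∞} (hf : AEMeasurable f μ)
    (hg : AEMeasurable g μ) :
    ∫⁻ x, f x * ∫⁻ y in closedBall x δ, g y ∂μ ∂μ ≤
      3 * (M ^ (2 / q) * ((∫⁻ x, f x ^ r ∂μ) ^ (1 / r) * (∫⁻ x, g x ^ r ∂μ) ^ (1 / r))) := by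
  set X := M ^ (2 / q) * ((∫⁻ x, f x ^ r ∂μ) ^ (1 / r) * (∫⁻ x, g x ^ r ∂μ) ^ (1 / r))
  set F : ℤ → ℝ≥0∞ := fun k => ∫⁻ x in gridCell δ k, f x ∂μ
  set G : ℤ → ℝ≥0∞ := fun k => ∫⁻ y in gridCell δ k, g y ∂μ
  have hball (k : ℤ) (x : ℝ) (hx : x ∈ gridCell δ k) :
      ∫⁻ y in closedBall x δ, g y ∂μ ≤ G (k + -1) + G (k + 0) + G (k + 1) := by
    rw [← sub_eq_add_neg, add_zero]
    calc ∫⁻ y in closedBall x δ, g y ∂μ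
        ≤ ∫⁻ y in gridCell δ (k - 1) ∪ gridCell δ k ∪ gridCell δ (k + 1), g y ∂μ :=
          lintegral_mono_set (closedBall_subset_gridCell_union hδ hx)
      _ ≤ _ := (lintegral_union_le _ _ _).trans (add_le_add_left (lintegral_union_le _ _ _) _)
  have hshift (m : ℤ) : ∑' k, F k * G (k + m) ≤ X :=
    tsum_setLIntegral_mul_setLIntegral_le μ hrq hle (measurableSet_gridCell δ)
      (pairwise_disjoint_gridCell hδ) hM (Equiv.addRight m) hf hg
  calc ∫⁻ x, f x * ∫⁻ y in closedBall x δ, g y ∂μ ∂μ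
      = ∑' k, ∫⁻ x in gridCell δ k, f x * ∫⁻ y in closedBall x δ, g y ∂μ ∂μ :=
        lintegral_eq_tsum_gridCell hδ μ _
    _ ≤ ∑' k, ∫⁻ x in gridCell δ k, f x * (G (k + -1) + G (k + 0) + G (k + 1)) ∂μ :=
        ENNReal.tsum_le_tsum fun k => setLIntegral_mono' (measurableSet_gridCell δ k)
          fun x hx => mul_le_mul_right (hball k x hx) _
    _ = ∑' k, F k * G (k + -1) + ∑' k, F k * G (k + 0) + ∑' k, F k * G (k + 1) := by
        rw [← ENNReal.tsum_add, ← ENNReal.tsum_add]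
        refine tsum_congr fun k => ?_
        rw [lintegral_mul_const'' _ hf.restrict, mul_add, mul_add]
    _ ≤ X + X + X := add_le_add (add_le_add (hshift _) (hshift _)) (hshift _)
    _ = 3 * X := by ring

theorem exists_nat_two_rpow_lt_le {t : ℝ} (ht0 : 0 < t) (ht2 : t ≤ 2) :
    ∃ n : ℕ, (2 : ℝ) ^ (-(n : ℝ)) < t ∧ t ≤ 2 ^ (1 - (n : ℝ)) := by
  obtain ⟨n, hle, hlt⟩ := exists_nat_pow_near ((one_le_div ht0).mpr ht2) one_lt_two
  refine ⟨n, ?_, ?_⟩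
  · rw [Real.rpow_neg zero_le_two, Real.rpow_natCast, inv_lt_comm₀ (by positivity) ht0]
    rw [pow_succ, div_eq_mul_inv] at hlt
    linarith
  · rw [Real.rpow_sub two_pos, Real.rpow_one, Real.rpow_natCast, le_div_iff₀ (by positivity)]
    rwa [le_div_iff₀ ht0, mul_comm] at hle

theorem ofReal_abs_sub_rpow_neg_le_tsum {ρ : ℝ} (hρ : 0 < ρ) {x y : ℝ} (hxy : |x - y| ≤ 2) :
    ENNReal.ofReal (|x - y| ^ (-ρ)) ≤
      ∑' n : ℕ, ENNReal.ofReal (2 ^ ((n : ℝ) * ρ)) *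
        (closedBall x (2 ^ (1 - (n : ℝ)))).indicator 1 y := by
  rcases (abs_nonneg (x - y)).eq_or_lt with h0 | hpos
  -- `0 ^ (-ρ) = 0` in Lean, so the diagonal is not charged to any scale.
  · rw [← h0, Real.zero_rpow (neg_ne_zero.mpr hρ.ne'), ENNReal.ofReal_zero]
    exact zero_le
  obtain ⟨n, hlt, hle⟩ := exists_nat_two_rpow_lt_le hpos hxy
  have hy : y ∈ closedBall x (2 ^ (1 - (n : ℝ))) := by
    rwa [mem_closedBall, Real.dist_eq, abs_sub_comm]
  refine le_trans ?_ (ENNReal.le_tsum n)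
  rw [indicator_of_mem hy, Pi.one_apply, mul_one]
  refine ENNReal.ofReal_le_ofReal ?_
  calc |x - y| ^ (-ρ) ≤ ((2 : ℝ) ^ (-(n : ℝ))) ^ (-ρ) :=
        Real.rpow_le_rpow_of_nonpos (by positivity) hlt.le (by linarith)
    _ = 2 ^ ((n : ℝ) * ρ) := by rw [← Real.rpow_mul zero_le_two, neg_mul_neg]

theorem measurable_setLIntegral_closedBall {α : Type*} [PseudoMetricSpace α] [MeasurableSpace α]
    [OpensMeasurableSpace α] [SecondCountableTopology α] {μ : Measure α} [SFinite μ]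
    {g : α → ℝ≥0∞} (hg : AEMeasurable g μ) (δ : ℝ) :
    Measurable fun x => ∫⁻ y in closedBall x δ, g y ∂μ := by
  have hset : MeasurableSet {p : α × α | dist p.2 p.1 ≤ δ} :=
    measurableSet_le (measurable_snd.dist measurable_fst) measurable_const
  have heq : (fun x => ∫⁻ y in closedBall x δ, g y ∂μ) =
      fun x => ∫⁻ y, {p : α × α | dist p.2 p.1 ≤ δ}.indicator (fun p => hg.mk g p.2) (x, y) ∂μ := by
    funext x
    rw [← lintegral_indicator measurableSet_closedBall]
    refine lintegral_congr_ae ?_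
    filter_upwards [hg.ae_eq_mk] with y hy
    by_cases h : dist y x ≤ δ
    · simp [h, hy]
    · simp [h]
  rw [heq]
  exact ((hg.measurable_mk.comp measurable_snd).indicator hset).lintegral_prod_right'

theorem tsum_ofReal_two_rpow_mul_rpow {q : ℝ} (hq : 0 < q) (α ρ : ℝ) (C : ℝ≥0∞) :
    ∑' n : ℕ, ENNReal.ofReal (2 ^ ((n : ℝ) * ρ)) *
        (C * ENNReal.ofReal (((2 : ℝ) ^ (1 - (n : ℝ))) ^ α)) ^ (2 / q) =
      C ^ (2 / q) * ENNReal.ofReal (2 ^ (2 * α / q)) *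
        (1 - ENNReal.ofReal (2 ^ (ρ - 2 * α / q)))⁻¹ := by
  have hexp (n : ℕ) : (2 : ℝ) ^ ((n : ℝ) * ρ) * (((2 : ℝ) ^ (1 - (n : ℝ))) ^ α) ^ (2 / q) =
      2 ^ (2 * α / q) * (2 ^ (ρ - 2 * α / q)) ^ n := by
    rw [← Real.rpow_mul zero_le_two, ← Real.rpow_mul zero_le_two, ← Real.rpow_add two_pos,
      ← Real.rpow_natCast, ← Real.rpow_mul zero_le_two, ← Real.rpow_add two_pos]
    congr 1
    field_simp
    ring
  have hterm (n : ℕ) : ENNReal.ofReal (2 ^ ((n : ℝ) * ρ)) *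
      (C * ENNReal.ofReal (((2 : ℝ) ^ (1 - (n : ℝ))) ^ α)) ^ (2 / q) =
      C ^ (2 / q) * ENNReal.ofReal (2 ^ (2 * α / q)) *
        ENNReal.ofReal (2 ^ (ρ - 2 * α / q)) ^ n := by
    rw [ENNReal.mul_rpow_of_nonneg _ _ (by positivity),
      ENNReal.ofReal_rpow_of_nonneg (by positivity) (by positivity),
      ← ENNReal.ofReal_pow (by positivity), mul_assoc, ← ENNReal.ofReal_mul (by positivity),
      ← hexp, ENNReal.ofReal_mul (by positivity)]
    ring
  simp only [hterm, ENNReal.tsum_mul_left, ENNReal.tsum_geometric]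

theorem setLIntegral_setLIntegral_mul_rpow_neg_le (μ : Measure ℝ) [SFinite μ] {α q r ρ : ℝ}
    (hrq : r.HolderConjugate q) (hle : r ≤ q) (hρ : 0 < ρ) {Cμ : ℝ≥0∞}
    (hμ : ∀ x δ, 0 < δ → μ (ball x δ) ≤ Cμ * ENNReal.ofReal (δ ^ α))
    {s : Set ℝ} (hs : MeasurableSet s) (hdiam : ∀ x ∈ s, ∀ y ∈ s, |x - y| ≤ 2)
    {f g : ℝ → ℝ≥0∞} (hf : AEMeasurable f μ) (hg : AEMeasurable g μ) :
    ∫⁻ x in s, ∫⁻ y in s, f x * g y * ENNReal.ofReal (|x - y| ^ (-ρ)) ∂μ ∂μ ≤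
      3 * Cμ ^ (2 / q) * ENNReal.ofReal (2 ^ (2 * α / q)) *
        (1 - ENNReal.ofReal (2 ^ (ρ - 2 * α / q)))⁻¹ *
        ((∫⁻ x, f x ^ r ∂μ) ^ (1 / r) * (∫⁻ x, g x ^ r ∂μ) ^ (1 / r)) := by
  set ν := μ.restrict s
  set δ : ℕ → ℝ := fun n => 2 ^ (1 - (n : ℝ))
  set c : ℕ → ℝ≥0∞ := fun n => ENNReal.ofReal (2 ^ ((n : ℝ) * ρ))
  set Φ : ℕ → ℝ → ℝ≥0∞ := fun n x => ∫⁻ y in closedBall x (δ n), g y ∂ν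
  have hδ (n : ℕ) : 0 < δ n := by positivity
  have hM (n : ℕ) (k : ℤ) : ν (gridCell (δ n) k) ≤ Cμ * ENNReal.ofReal (δ n ^ α) :=
    (Measure.restrict_apply_le _ _).trans
      ((measure_mono (gridCell_subset_ball (hδ n) k)).trans (hμ _ _ (hδ n)))
  have hnorm (h : ℝ → ℝ≥0∞) : (∫⁻ x, h x ^ r ∂ν) ^ (1 / r) ≤ (∫⁻ x, h x ^ r ∂μ) ^ (1 / r) :=
    ENNReal.rpow_le_rpow (setLIntegral_le_lintegral _ _) hrq.one_div_nonneg
  have hinner (x : ℝ) (hx : x ∈ s) :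
      ∫⁻ y in s, f x * g y * ENNReal.ofReal (|x - y| ^ (-ρ)) ∂μ ≤ ∑' n, c n * (f x * Φ n x) := by
    calc ∫⁻ y in s, f x * g y * ENNReal.ofReal (|x - y| ^ (-ρ)) ∂μ
        ≤ ∫⁻ y, ∑' n, c n * (f x * (closedBall x (δ n)).indicator g y) ∂ν := by
          refine setLIntegral_mono' hs fun y hy => ?_
          calc f x * g y * ENNReal.ofReal (|x - y| ^ (-ρ))
              ≤ f x * g y * ∑' n, c n * (closedBall x (δ n)).indicator 1 y :=
                mul_le_mul_right (ofReal_abs_sub_rpow_neg_le_tsum hρ (hdiam x hx y hy)) _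
            _ = ∑' n, c n * (f x * (closedBall x (δ n)).indicator g y) := by
                rw [← ENNReal.tsum_mul_left]
                refine tsum_congr fun n => ?_
                by_cases hy : y ∈ closedBall x (δ n)
                · simp only [indicator_of_mem hy, Pi.one_apply]
                  ring
                · simp only [indicator_of_notMem hy, mul_zero]
      _ = ∑' n, c n * (f x * Φ n x) := by
          have hgn (n : ℕ) : AEMeasurable ((closedBall x (δ n)).indicator g) ν :=
            hg.restrict.indicator measurableSet_closedBall
          rw [lintegral_tsum fun n => ((hgn n).const_mul _).const_mul _]
          refine tsum_congr fun n => ?_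
          rw [lintegral_const_mul'' _ ((hgn n).const_mul _), lintegral_const_mul'' _ (hgn n),
            lintegral_indicator measurableSet_closedBall]
  calc ∫⁻ x in s, ∫⁻ y in s, f x * g y * ENNReal.ofReal (|x - y| ^ (-ρ)) ∂μ ∂μ
      ≤ ∫⁻ x, ∑' n, c n * (f x * Φ n x) ∂ν := setLIntegral_mono' hs hinner
    _ = ∑' n, c n * ∫⁻ x, f x * Φ n x ∂ν := by
        have hΦ (n : ℕ) : AEMeasurable (fun x => f x * Φ n x) ν :=
          hf.restrict.mul (measurable_setLIntegral_closedBall hg.restrict (δ n)).aemeasurable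
        rw [lintegral_tsum fun n => (hΦ n).const_mul _]
        exact tsum_congr fun n => lintegral_const_mul'' _ (hΦ n)
    _ ≤ ∑' n, c n * (3 * ((Cμ * ENNReal.ofReal (δ n ^ α)) ^ (2 / q) *
          ((∫⁻ x, f x ^ r ∂μ) ^ (1 / r) * (∫⁻ x, g x ^ r ∂μ) ^ (1 / r)))) := by
        refine ENNReal.tsum_le_tsum fun n => mul_le_mul_right ?_ _
        refine (lintegral_mul_setLIntegral_closedBall_le ν hrq hle (hδ n) (hM n)
          hf.restrict hg.restrict).trans ?_
        exact mul_le_mul_right (mul_le_mul_right (mul_le_mul' (hnorm f) (hnorm g)) _) _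
    _ = 3 * ((∫⁻ x, f x ^ r ∂μ) ^ (1 / r) * (∫⁻ x, g x ^ r ∂μ) ^ (1 / r)) *
          ∑' n, c n * (Cμ * ENNReal.ofReal (δ n ^ α)) ^ (2 / q) := by
        rw [← ENNReal.tsum_mul_left]
        exact tsum_congr fun n => by ring
    _ = _ := by
        rw [tsum_ofReal_two_rpow_mul_rpow hrq.symm.pos α ρ Cμ]
        ring

theorem eLpNorm_ofReal_eq_lintegral_rpow {X : Type*} [MeasurableSpace X] (μ : Measure X)
    {G : X → ℝ} (hG : ∀ x, 0 ≤ G x) {r : ℝ} (hr : 0 < r) :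
    eLpNorm G (ENNReal.ofReal r) μ = (∫⁻ x, ENNReal.ofReal (G x) ^ r ∂μ) ^ (1 / r) := by
  rw [eLpNorm_eq_lintegral_rpow_enorm_toReal (by simpa using hr) ENNReal.ofReal_ne_top,
    ENNReal.toReal_ofReal hr.le]
  simp only [Real.enorm_eq_ofReal (hG _)]

theorem hls_type_fractal_general (α q ρ : ℝ) (hq : 2 ≤ q)
    (hρ0 : 0 < q * ρ / 2) (hρ : q * ρ / 2 < α)
    (μ : Measure ℝ) (Cμ : ℝ≥0∞) (hCμ : Cμ ≠ ⊤)
    (hμ : ∀ (x : ℝ) (r : ℝ), 0 < r → μ (Metric.ball x r) ≤ Cμ * ENNReal.ofReal (r ^ α)) :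
    ∃ C : ℝ≥0∞, C ≠ ⊤ ∧ ∀ G H : ℝ → ℝ,
      (∀ x, 0 ≤ G x) → (∀ x, 0 ≤ H x) →
      (∀ x, G x ≠ 0 → x ∈ Set.Icc (-1:ℝ) 1) → (∀ x, H x ≠ 0 → x ∈ Set.Icc (-1:ℝ) 1) →
      MemLp G (ENNReal.ofReal (q / (q - 1))) μ →
      MemLp H (ENNReal.ofReal (q / (q - 1))) μ →
      ∫⁻ x in Set.Icc (-1:ℝ) 1, ∫⁻ x' in Set.Icc (-1:ℝ) 1,
          ENNReal.ofReal (G x * H x' * |x - x'| ^ (-ρ)) ∂μ ∂μ ≤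
        C * eLpNorm G (ENNReal.ofReal (q / (q - 1))) μ *
          eLpNorm H (ENNReal.ofReal (q / (q - 1))) μ := by
  have hconj : (q / (q - 1)).HolderConjugate q :=
    (Real.HolderConjugate.conjExponent (by linarith)).symm
  have hle : q / (q - 1) ≤ q := by
    rw [div_le_iff₀ (by linarith)]
    nlinarith
  have hgeom : ENNReal.ofReal (2 ^ (ρ - 2 * α / q)) < 1 := by
    refine ENNReal.ofReal_lt_one.mpr (Real.rpow_lt_one_of_one_lt_of_neg one_lt_two ?_)
    rw [sub_neg, lt_div_iff₀ (by linarith)]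
    linarith
  have : IsLocallyFiniteMeasure μ := ⟨fun x => ⟨ball x 1, ball_mem_nhds x one_pos,
    (hμ x 1 one_pos).trans_lt (ENNReal.mul_lt_top hCμ.lt_top ENNReal.ofReal_lt_top)⟩⟩
  refine ⟨3 * Cμ ^ (2 / q) * ENNReal.ofReal (2 ^ (2 * α / q)) *
    (1 - ENNReal.ofReal (2 ^ (ρ - 2 * α / q)))⁻¹, ?_, ?_⟩
  · refine ENNReal.mul_ne_top (ENNReal.mul_ne_top (ENNReal.mul_ne_top (by norm_num) ?_)
      ENNReal.ofReal_ne_top) (ENNReal.inv_ne_top.mpr (tsub_pos_of_lt hgeom).ne')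
    exact ENNReal.rpow_ne_top_of_nonneg (by positivity) hCμ
  intro G H hG0 hH0 _ _ hGm hHm
  rw [eLpNorm_ofReal_eq_lintegral_rpow μ hG0 hconj.pos,
    eLpNorm_ofReal_eq_lintegral_rpow μ hH0 hconj.pos, mul_assoc]
  have hdiam : ∀ x ∈ Icc (-1 : ℝ) 1, ∀ y ∈ Icc (-1 : ℝ) 1, |x - y| ≤ 2 := fun x hx y hy =>
    abs_le.mpr ⟨by linarith [hx.1, hy.2], by linarith [hx.2, hy.1]⟩
  simp only [ENNReal.ofReal_mul (mul_nonneg (hG0 _) (hH0 _)), ENNReal.ofReal_mul (hG0 _)]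
  exact setLIntegral_setLIntegral_mul_rpow_neg_le μ hconj hle (by nlinarith) hμ measurableSet_Icc
    hdiam hGm.aemeasurable.ennreal_ofReal hHm.aemeasurable.ennreal_ofReal

theorem hls_type_fractal (α q ρ : ℝ) (hα0 : 0 < α) (hα1 : α ≤ 1) (hq : 2 ≤ q)
    (hρ0 : 0 < q * ρ / 2) (hρ : q * ρ / 2 < α)
    (μ : Measure ℝ) (Cμ : ℝ≥0∞) (hCμ : Cμ ≠ ⊤)
    (hμ : ∀ (x : ℝ) (r : ℝ), 0 < r → μ (Metric.ball x r) ≤ Cμ * ENNReal.ofReal (r ^ α)) :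
    ∃ C : ℝ≥0∞, C ≠ ⊤ ∧ ∀ G H : ℝ → ℝ,
      (∀ x, 0 ≤ G x) → (∀ x, 0 ≤ H x) →
      (∀ x, G x ≠ 0 → x ∈ Set.Icc (-1:ℝ) 1) → (∀ x, H x ≠ 0 → x ∈ Set.Icc (-1:ℝ) 1) →
      MemLp G (ENNReal.ofReal (q / (q - 1))) μ →
      MemLp H (ENNReal.ofReal (q / (q - 1))) μ →
      ∫⁻ x in Set.Icc (-1:ℝ) 1, ∫⁻ x' in Set.Icc (-1:ℝ) 1,
          ENNReal.ofReal (G x * H x' * |x - x'| ^ (-ρ)) ∂μ ∂μ ≤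
        C * eLpNorm G (ENNReal.ofReal (q / (q - 1))) μ *
          eLpNorm H (ENNReal.ofReal (q / (q - 1))) μ :=
  hls_type_fractal_general α q ρ hq hρ0 hρ μ Cμ hCμ hμ
end

section
/- (van der Corput, second derivative) Let a < b, let φ: [a,b] → ℝ be twice continuously differentiable with |φ''(ξ)| ≥ 1 for all ξ ∈ [a,b], and let ψ: [a,b] → ℂ be continuously differentiable. Then there exists an absolute constant C such that for all λ > 0, |∫_a^b e^{iλφ(ξ)} ψ(ξ) dξ| ≤ C λ^{−1/2} ( ‖ψ'‖_{L^1[a,b]} + ‖ψ‖_{L^∞[a,b]} ). -/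
/-!
If `φ'` is monotone and `|φ'| ≥ δ`, writing `e^{iφ} = (e^{iφ})' / (iφ')` and integrating by parts
bounds `∫ e^{iφ}` by `4 / δ`, because `1 / φ'` is monotone and hence has variation at most `2 / δ`.
If `φ'' ≥ μ > 0`, then `|φ'(x)| ≥ μ |x - c|` for a suitable `c`, so this applies with `δ = √μ` off a
window of length `2 / √μ` around `c`, and the window contributes at most its length. Applied to `λφ`
(and to `-λφ`, i.e. after complex conjugation, when `φ'' ≤ -1`) this bounds every partial integral
`∫_a^x e^{iλφ}` by `10 λ^{-1/2}`; integrating by parts once more against `ψ` gives the theorem.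
-/

open MeasureTheory Set intervalIntegral

open Complex

theorem norm_integral_exp_I_mul_neg (φ : ℝ → ℝ) (a b : ℝ) :
    ‖∫ x in a..b, cexp (I * ↑(-φ x))‖ = ‖∫ x in a..b, cexp (I * φ x)‖ := by
  rw [← RCLike.norm_conj, ← intervalIntegral_conj]
  congr 2 with x
  rw [← exp_conj, map_mul, conj_I, conj_ofReal, ofReal_neg, neg_mul, mul_neg, neg_neg]

theorem integral_eq_sub_of_hasDerivWithinAt_Icc {E : Type*} [NormedAddCommGroup E]
    [NormedSpace ℝ E] [CompleteSpace E] {f f' : ℝ → E} {a b : ℝ} (hab : a ≤ b)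
    (hf : ∀ x ∈ Icc a b, HasDerivWithinAt f (f' x) (Icc a b) x)
    (hint : IntervalIntegrable f' volume a b) : ∫ x in a..b, f' x = f b - f a :=
  integral_eq_sub_of_hasDerivAt_of_le hab (fun x hx => (hf x hx).continuousWithinAt)
    (fun x hx => (hf x (Ioo_subset_Icc_self hx)).hasDerivAt (Icc_mem_nhds hx.1 hx.2)) hint

theorem IsPreconnected.forall_le_or_forall_le_neg {X : Type*} [TopologicalSpace X] {s : Set X}
    {g : X → ℝ} {μ : ℝ} (hs : IsPreconnected s) (hμ : 0 < μ) (hg : ContinuousOn g s)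
    (hgμ : ∀ x ∈ s, μ ≤ |g x|) : (∀ x ∈ s, μ ≤ g x) ∨ ∀ x ∈ s, g x ≤ -μ := by
  by_contra! h
  obtain ⟨⟨x, hx, hgx⟩, y, hy, hgy⟩ := h
  have hgx' : g x ≤ -μ := by rcases le_abs.mp (hgμ x hx) with h | h <;> linarith
  have hgy' : μ ≤ g y := by rcases le_abs.mp (hgμ y hy) with h | h <;> linarith
  obtain ⟨z, hz, hz0⟩ := hs.intermediate_value hx hy hg
    (show (0 : ℝ) ∈ Icc (g x) (g y) from ⟨by linarith, by linarith⟩)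
  have := hgμ z hz
  rw [hz0, abs_zero] at this
  linarith

section Oscillatory

variable {a b : ℝ} {φ f g : ℝ → ℝ}

theorem integral_exp_I_mul_eq_of_deriv_ne_zero (hab : a ≤ b)
    (hφ : ∀ x ∈ Icc a b, HasDerivWithinAt φ (f x) (Icc a b) x)
    (hf : ∀ x ∈ Icc a b, HasDerivWithinAt f (g x) (Icc a b) x)
    (hg : ContinuousOn g (Icc a b)) (hf0 : ∀ x ∈ Icc a b, f x ≠ 0) :
    ∫ x in a..b, cexp (I * φ x) =
      -I * ↑(f b)⁻¹ * cexp (I * φ b) - -I * ↑(f a)⁻¹ * cexp (I * φ a) -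
        ∫ x in a..b, I * ↑(g x / f x ^ 2) * cexp (I * φ x) := by
  -- integrate `u v'` by parts, where `u = 1 / (I f)` and `v = exp (I φ)`
  have hφc : ContinuousOn φ (Icc a b) := fun x hx => (hφ x hx).continuousWithinAt
  have hfc : ContinuousOn f (Icc a b) := fun x hx => (hf x hx).continuousWithinAt
  have hu : ∀ x ∈ uIcc a b, HasDerivWithinAt (fun x => -I * ↑(f x)⁻¹)
      (I * ↑(g x / f x ^ 2)) (uIcc a b) x := by
    rw [uIcc_of_le hab]
    intro x hx
    refine (((hf x hx).inv (hf0 x hx)).ofReal_comp.const_mul (-I)).congr_deriv ?_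
    push_cast
    ring
  have hv : ∀ x ∈ uIcc a b, HasDerivWithinAt (fun x => cexp (I * φ x))
      (I * f x * cexp (I * φ x)) (uIcc a b) x := by
    rw [uIcc_of_le hab]
    intro x hx
    exact ((hφ x hx).ofReal_comp.const_mul I).cexp.congr_deriv (by ring)
  have hG : ContinuousOn (fun x => g x / f x ^ 2) (Icc a b) :=
    hg.div (hfc.pow 2) fun x hx => pow_ne_zero 2 (hf0 x hx)
  rw [← integral_mul_deriv_eq_deriv_mul_of_hasDerivWithinAt hu hv
    (ContinuousOn.intervalIntegrable_of_Icc hab (by fun_prop))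
    (ContinuousOn.intervalIntegrable_of_Icc hab (by fun_prop))]
  refine integral_congr fun x hx => ?_
  have : (f x : ℂ) ≠ 0 := ofReal_ne_zero.2 (hf0 x (uIcc_of_le hab ▸ hx))
  push_cast
  field_simp
  rw [I_sq, neg_neg]

theorem norm_integral_exp_I_mul_le_of_le_abs_deriv {δ : ℝ} (hab : a ≤ b) (hδ : 0 < δ)
    (hφ : ∀ x ∈ Icc a b, HasDerivWithinAt φ (f x) (Icc a b) x)
    (hf : ∀ x ∈ Icc a b, HasDerivWithinAt f (g x) (Icc a b) x)
    (hg : ContinuousOn g (Icc a b)) (hg0 : ∀ x ∈ Icc a b, 0 ≤ g x)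
    (hfδ : ∀ x ∈ Ioo a b, δ ≤ |f x|) :
    ‖∫ x in a..b, cexp (I * φ x)‖ ≤ 4 / δ := by
  rcases hab.eq_or_lt with rfl | hab'
  · simp only [integral_same, norm_zero]; positivity
  have hfc : ContinuousOn f (Icc a b) := fun x hx => (hf x hx).continuousWithinAt
  replace hfδ : ∀ x ∈ Icc a b, δ ≤ |f x| := by
    rw [← closure_Ioo hab'.ne]
    exact le_on_closure hfδ continuousOn_const (closure_Ioo hab'.ne ▸ hfc.abs)
  have hf0 : ∀ x ∈ Icc a b, f x ≠ 0 := fun x hx => abs_pos.mp (hδ.trans_le (hfδ x hx))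
  have hinv : ∀ x ∈ Icc a b, |(f x)⁻¹| ≤ δ⁻¹ := fun x hx => by
    rw [abs_inv]; exact inv_anti₀ hδ (hfδ x hx)
  have hGc : ContinuousOn (fun x => g x / f x ^ 2) (Icc a b) :=
    hg.div (hfc.pow 2) fun x hx => pow_ne_zero 2 (hf0 x hx)
  have hGint : ∫ x in a..b, g x / f x ^ 2 = (f a)⁻¹ - (f b)⁻¹ := by
    rw [integral_eq_sub_of_hasDerivWithinAt_Icc hab (f := fun x => -(f x)⁻¹)
      (fun x hx => ((hf x hx).inv (hf0 x hx)).neg.congr_deriv (by rw [neg_div, neg_neg]))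
      (hGc.intervalIntegrable_of_Icc hab)]
    ring
  have hrest : ‖∫ x in a..b, I * ↑(g x / f x ^ 2) * cexp (I * φ x)‖ ≤ (f a)⁻¹ - (f b)⁻¹ := by
    rw [← hGint]
    refine norm_integral_le_of_norm_le hab (ae_of_all _ fun x hx => ?_)
      (hGc.intervalIntegrable_of_Icc hab)
    have hGx : 0 ≤ g x / f x ^ 2 := div_nonneg (hg0 x (Ioc_subset_Icc_self hx)) (sq_nonneg _)
    rw [norm_mul, norm_mul, norm_I, norm_exp_I_mul_ofReal, norm_real, Real.norm_of_nonneg hGx,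
      one_mul, mul_one]
  have hbdry : ∀ x ∈ Icc a b, ‖-I * ↑(f x)⁻¹ * cexp (I * φ x)‖ ≤ δ⁻¹ := fun x hx => by
    rw [norm_mul, norm_mul, norm_neg, norm_I, norm_exp_I_mul_ofReal, norm_real, Real.norm_eq_abs,
      one_mul, mul_one]
    exact hinv x hx
  rw [integral_exp_I_mul_eq_of_deriv_ne_zero hab hφ hf hg hf0]
  calc _ ≤ δ⁻¹ + δ⁻¹ + ((f a)⁻¹ - (f b)⁻¹) :=
        (norm_sub_le _ _).trans (add_le_add ((norm_sub_le _ _).trans (add_le_add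
          (hbdry b (right_mem_Icc.2 hab)) (hbdry a (left_mem_Icc.2 hab)))) hrest)
    _ ≤ 4 / δ := by
      linarith [le_abs_self (f a)⁻¹, neg_abs_le (f b)⁻¹, hinv a (left_mem_Icc.2 hab),
        hinv b (right_mem_Icc.2 hab), div_eq_mul_inv 4 δ]

theorem exists_mul_abs_sub_le_abs_of_le_deriv {μ : ℝ} (hab : a ≤ b)
    (hf : ∀ x ∈ Icc a b, HasDerivWithinAt f (g x) (Icc a b) x) (hgμ : ∀ x ∈ Icc a b, μ ≤ g x) :
    ∃ c ∈ Icc a b, ∀ x ∈ Icc a b, μ * |x - c| ≤ |f x| := by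
  have hfc : ContinuousOn f (Icc a b) := fun x hx => (hf x hx).continuousWithinAt
  have hderiv : ∀ x ∈ interior (Icc a b), HasDerivAt f (g x) x := fun x hx => by
    rw [interior_Icc] at hx
    exact (hf x (Ioo_subset_Icc_self hx)).hasDerivAt (Icc_mem_nhds hx.1 hx.2)
  have grow : ∀ x ∈ Icc a b, ∀ y ∈ Icc a b, x ≤ y → μ * (y - x) ≤ f y - f x :=
    (convex_Icc a b).mul_sub_le_image_sub_of_le_deriv hfc
      (fun x hx => (hderiv x hx).differentiableAt.differentiableWithinAt)
      (fun x hx => (hderiv x hx).deriv ▸ hgμ x (interior_subset hx))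
  have ha := left_mem_Icc.2 hab
  have hb := right_mem_Icc.2 hab
  rcases le_or_gt 0 (f a) with hfa | hfa
  · refine ⟨a, ha, fun x hx => ?_⟩
    rw [abs_of_nonneg (sub_nonneg.2 hx.1)]
    linarith [grow a ha x hx hx.1, le_abs_self (f x)]
  rcases le_or_gt (f b) 0 with hfb | hfb
  · refine ⟨b, hb, fun x hx => ?_⟩
    rw [abs_of_nonpos (sub_nonpos.2 hx.2)]
    linarith [grow x hx b hb hx.2, neg_abs_le (f x)]
  obtain ⟨c, hc, hfc0⟩ := intermediate_value_Icc hab hfc ⟨hfa.le, hfb.le⟩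
  refine ⟨c, hc, fun x hx => ?_⟩
  rcases le_total c x with hcx | hxc
  · rw [abs_of_nonneg (sub_nonneg.2 hcx)]
    linarith [grow c hc x hx hcx, le_abs_self (f x)]
  · rw [abs_of_nonpos (sub_nonpos.2 hxc)]
    linarith [grow x hx c hc hxc, neg_abs_le (f x)]

theorem norm_integral_exp_I_mul_le_of_mul_abs_sub_le_abs_deriv {c μ : ℝ} (hab : a ≤ b)
    (hμ : 0 < μ) (hφ : ∀ x ∈ Icc a b, HasDerivWithinAt φ (f x) (Icc a b) x)
    (hf : ∀ x ∈ Icc a b, HasDerivWithinAt f (g x) (Icc a b) x)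
    (hg : ContinuousOn g (Icc a b)) (hg0 : ∀ x ∈ Icc a b, 0 ≤ g x) (hc : c ∈ Icc a b)
    (hfc : ∀ x ∈ Icc a b, μ * |x - c| ≤ |f x|) :
    ‖∫ x in a..b, cexp (I * φ x)‖ ≤ 10 / √μ := by
  -- `|φ'| ≥ √μ` off the window `[c - t, c + t]`, whose length `2t` balances the bound `4 / √μ`
  set t := (√μ)⁻¹
  have hμt : μ * t = √μ := by rw [← div_eq_mul_inv, Real.div_sqrt]
  set p := max a (c - t)
  set q := min b (c + t)
  have ht : 0 ≤ t := inv_nonneg.2 (Real.sqrt_nonneg μ)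
  have hap : a ≤ p := le_max_left _ _
  have hpq : p ≤ q :=
    max_le (le_min hab (by linarith [hc.1])) (le_min (by linarith [hc.2]) (by linarith))
  have hqb : q ≤ b := min_le_left _ _
  have piece : ∀ p' q', a ≤ p' → p' ≤ q' → q' ≤ b → (∀ x ∈ Ioo p' q', √μ ≤ |f x|) →
      ‖∫ x in p'..q', cexp (I * φ x)‖ ≤ 4 / √μ := fun p' q' hap' hpq' hqb' hfμ => by
    have hsub : Icc p' q' ⊆ Icc a b := Icc_subset_Icc hap' hqb'
    exact norm_integral_exp_I_mul_le_of_le_abs_deriv hpq' (Real.sqrt_pos.2 hμ)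
      (fun x hx => (hφ x (hsub hx)).mono hsub) (fun x hx => (hf x (hsub hx)).mono hsub)
      (hg.mono hsub) (fun x hx => hg0 x (hsub hx)) hfμ
  have hleft : ‖∫ x in a..p, cexp (I * φ x)‖ ≤ 4 / √μ := by
    refine piece a p le_rfl hap (hpq.trans hqb) fun x hx => ?_
    have hxc : x < c - t := (lt_max_iff.1 hx.2).resolve_left hx.1.not_gt
    have := hfc x ⟨hx.1.le, hx.2.le.trans (hpq.trans hqb)⟩
    rw [abs_of_neg (by linarith)] at this
    nlinarith
  have hright : ‖∫ x in q..b, cexp (I * φ x)‖ ≤ 4 / √μ := by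
    refine piece q b (hap.trans hpq) hqb le_rfl fun x hx => ?_
    have hxc : c + t < x := (min_lt_iff.1 hx.1).resolve_left hx.2.not_gt
    have := hfc x ⟨(hap.trans hpq).trans hx.1.le, hx.2.le⟩
    rw [abs_of_pos (by linarith)] at this
    nlinarith
  have hmiddle : ‖∫ x in p..q, cexp (I * φ x)‖ ≤ 2 * t := by
    refine (norm_integral_le_of_norm_le_const fun x _ =>
      (norm_exp_I_mul_ofReal (φ x)).le).trans ?_
    rw [one_mul, abs_of_nonneg (sub_nonneg.2 hpq)]
    have : q ≤ c + t := min_le_right _ _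
    have : c - t ≤ p := le_max_right _ _
    linarith
  have he : ContinuousOn (fun x => cexp (I * φ x)) (Icc a b) := by
    have hφc : ContinuousOn φ (Icc a b) := fun x hx => (hφ x hx).continuousWithinAt
    fun_prop
  have hint : ∀ p' q', a ≤ p' → p' ≤ q' → q' ≤ b →
      IntervalIntegrable (fun x => cexp (I * φ x)) volume p' q' := fun p' q' hap' hpq' hqb' =>
    (he.mono (Icc_subset_Icc hap' hqb')).intervalIntegrable_of_Icc hpq'
  rw [← integral_add_adjacent_intervals (hint a p le_rfl hap (hpq.trans hqb))
    (hint p b hap (hpq.trans hqb) le_rfl), ← integral_add_adjacent_intervals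
    (hint p q hap hpq hqb) (hint q b (hap.trans hpq) hqb le_rfl)]
  calc _ ≤ 4 / √μ + (2 * t + 4 / √μ) :=
        (norm_add_le _ _).trans
          (add_le_add hleft ((norm_add_le _ _).trans (add_le_add hmiddle hright)))
    _ = 10 / √μ := by simp only [t]; ring

theorem norm_integral_exp_I_mul_le_of_le_second_deriv {μ : ℝ} (hab : a ≤ b) (hμ : 0 < μ)
    (hφ : ∀ x ∈ Icc a b, HasDerivWithinAt φ (f x) (Icc a b) x)
    (hf : ∀ x ∈ Icc a b, HasDerivWithinAt f (g x) (Icc a b) x)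
    (hg : ContinuousOn g (Icc a b)) (hgμ : ∀ x ∈ Icc a b, μ ≤ g x) :
    ‖∫ x in a..b, cexp (I * φ x)‖ ≤ 10 / √μ := by
  obtain ⟨c, hc, hfc⟩ := exists_mul_abs_sub_le_abs_of_le_deriv hab hf hgμ
  exact norm_integral_exp_I_mul_le_of_mul_abs_sub_le_abs_deriv hab hμ hφ hf hg
    (fun x hx => hμ.le.trans (hgμ x hx)) hc hfc

theorem norm_integral_exp_I_mul_le_of_le_abs_second_deriv {μ : ℝ} (hab : a ≤ b) (hμ : 0 < μ)
    (hφ : ∀ x ∈ Icc a b, HasDerivWithinAt φ (f x) (Icc a b) x)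
    (hf : ∀ x ∈ Icc a b, HasDerivWithinAt f (g x) (Icc a b) x)
    (hg : ContinuousOn g (Icc a b)) (hgμ : ∀ x ∈ Icc a b, μ ≤ |g x|) :
    ‖∫ x in a..b, cexp (I * φ x)‖ ≤ 10 / √μ := by
  rcases isPreconnected_Icc.forall_le_or_forall_le_neg hμ hg hgμ with hpos | hneg
  · exact norm_integral_exp_I_mul_le_of_le_second_deriv hab hμ hφ hf hg hpos
  · rw [← norm_integral_exp_I_mul_neg]
    exact norm_integral_exp_I_mul_le_of_le_second_deriv hab hμ (fun x hx => (hφ x hx).neg)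
      (fun x hx => (hf x hx).neg) hg.neg fun x hx => le_neg.2 (hneg x hx)

theorem norm_integral_exp_I_mul_const_mul_le {lam : ℝ} (hab : a ≤ b) (hlam : 0 < lam)
    (hφ : ∀ x ∈ Icc a b, HasDerivWithinAt φ (f x) (Icc a b) x)
    (hf : ∀ x ∈ Icc a b, HasDerivWithinAt f (g x) (Icc a b) x)
    (hg : ContinuousOn g (Icc a b)) (hg1 : ∀ x ∈ Icc a b, 1 ≤ |g x|) :
    ‖∫ x in a..b, cexp (I * ↑(lam * φ x))‖ ≤ 10 * lam ^ (-(1 : ℝ) / 2) := by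
  rw [neg_div, Real.rpow_neg hlam.le, ← Real.sqrt_eq_rpow, ← div_eq_mul_inv]
  refine norm_integral_exp_I_mul_le_of_le_abs_second_deriv hab hlam
    (fun x hx => (hφ x hx).const_mul lam) (fun x hx => (hf x hx).const_mul lam)
    (continuousOn_const.mul hg) fun x hx => ?_
  rw [abs_mul, abs_of_pos hlam]
  exact le_mul_of_one_le_right hlam.le (hg1 x hx)

end Oscillatory

theorem norm_integral_mul_le_of_norm_primitive_le {a b K : ℝ} {h ψ ψ' : ℝ → ℂ} (hab : a ≤ b)
    (hh : ContinuousOn h (Icc a b))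
    (hψ : ∀ x ∈ Icc a b, HasDerivWithinAt ψ (ψ' x) (Icc a b) x)
    (hψ' : IntervalIntegrable ψ' volume a b)
    (hK : ∀ x ∈ Icc a b, ‖∫ t in a..x, h t‖ ≤ K) :
    ‖∫ x in a..b, h x * ψ x‖ ≤ K * ((∫ x in a..b, ‖ψ' x‖) + ‖ψ b‖) := by
  set F : ℝ → ℂ := fun x => ∫ t in a..x, h t
  have hF : ContinuousOn F (uIcc a b) :=
    continuousOn_primitive_interval (hh.integrableOn_Icc.mono_set (uIcc_of_le hab).subset)
  have hF' : ∀ x ∈ Ioo a b, HasDerivAt F (h x) x := fun x hx =>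
    integral_hasDerivAt_right
      ((hh.mono (Icc_subset_Icc_right hx.2.le)).intervalIntegrable_of_Icc hx.1.le)
      ((hh.mono Ioo_subset_Icc_self).stronglyMeasurableAtFilter isOpen_Ioo x hx)
      (hh.continuousAt (Icc_mem_nhds hx.1 hx.2))
  have hψ'' : ∀ x ∈ Ioo a b, HasDerivAt ψ (ψ' x) x := fun x hx =>
    (hψ x (Ioo_subset_Icc_self hx)).hasDerivAt (Icc_mem_nhds hx.1 hx.2)
  rw [← uIcc_of_le hab] at hψ
  have hparts := integral_mul_deriv_eq_deriv_mul_of_hasDerivAt hF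
    (fun x hx => (hψ x hx).continuousWithinAt) (by rwa [min_eq_left hab, max_eq_right hab])
    (by rwa [min_eq_left hab, max_eq_right hab]) (hh.intervalIntegrable_of_Icc hab) hψ'
  have hsplit : ∫ x in a..b, h x * ψ x = F b * ψ b - ∫ x in a..b, F x * ψ' x := by
    rw [hparts, show F a = 0 from integral_same]
    ring
  have hbdry : ‖F b * ψ b‖ ≤ K * ‖ψ b‖ := by
    rw [norm_mul]
    exact mul_le_mul_of_nonneg_right (hK b (right_mem_Icc.2 hab)) (norm_nonneg _)
  have hrest : ‖∫ x in a..b, F x * ψ' x‖ ≤ K * ∫ x in a..b, ‖ψ' x‖ := by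
    rw [← intervalIntegral.integral_const_mul]
    refine norm_integral_le_of_norm_le hab (ae_of_all _ fun x hx => ?_) (hψ'.norm.const_mul K)
    rw [norm_mul]
    exact mul_le_mul_of_nonneg_right (hK x (Ioc_subset_Icc_self hx)) (norm_nonneg _)
  rw [hsplit, mul_add, add_comm]
  exact (norm_sub_le _ _).trans (add_le_add hbdry hrest)

theorem ContDiffOn.hasDerivWithinAt_iteratedDerivWithin_two {𝕜 F : Type*}
    [NontriviallyNormedField 𝕜] [NormedAddCommGroup F] [NormedSpace 𝕜 F] {φ : 𝕜 → F}
    {s : Set 𝕜} (hφ : ContDiffOn 𝕜 2 φ s) (hs : UniqueDiffOn 𝕜 s) {x : 𝕜} (hx : x ∈ s) :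
    HasDerivWithinAt (derivWithin φ s) (iteratedDerivWithin 2 φ s x) s x := by
  rw [iteratedDerivWithin_succ, iteratedDerivWithin_one]
  exact ((hφ.derivWithin hs (m := 1) (by norm_num)).differentiableOn one_ne_zero x
    hx).hasDerivWithinAt

theorem van_der_corput_second :
    ∃ C : ℝ, 0 < C ∧ ∀ (a b : ℝ), a < b → ∀ (φ : ℝ → ℝ) (ψ : ℝ → ℂ),
      ContDiffOn ℝ 2 φ (Set.Icc a b) →
      (∀ ξ ∈ Set.Icc a b, 1 ≤ |iteratedDerivWithin 2 φ (Set.Icc a b) ξ|) →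
      ContDiffOn ℝ 1 ψ (Set.Icc a b) →
      ∀ lam : ℝ, 0 < lam →
        ‖∫ ξ in a..b, Complex.exp (Complex.I * ((lam * φ ξ : ℝ) : ℂ)) * ψ ξ‖ ≤
          C * lam ^ (-(1:ℝ)/2) *
            ((∫ ξ in a..b, ‖derivWithin ψ (Set.Icc a b) ξ‖) + ⨆ ξ : Set.Icc a b, ‖ψ ξ‖) := by
  refine ⟨10, by norm_num, fun a b hab φ ψ hφ hφ'' hψ lam hlam => ?_⟩
  have hs : UniqueDiffOn ℝ (Icc a b) := uniqueDiffOn_Icc hab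
  have hosc : ∀ x ∈ Icc a b,
      ‖∫ t in a..x, cexp (I * ↑(lam * φ t))‖ ≤ 10 * lam ^ (-(1 : ℝ) / 2) := fun x hx => by
    have hsub : Icc a x ⊆ Icc a b := Icc_subset_Icc_right hx.2
    exact norm_integral_exp_I_mul_const_mul_le hx.1 hlam
      (fun t ht => ((hφ.differentiableOn two_ne_zero t (hsub ht)).hasDerivWithinAt).mono hsub)
      (fun t ht => (hφ.hasDerivWithinAt_iteratedDerivWithin_two hs (hsub ht)).mono hsub)
      ((hφ.continuousOn_iteratedDerivWithin le_rfl hs).mono hsub) fun t ht => hφ'' t (hsub ht)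
  have hψ_le_iSup : ‖ψ b‖ ≤ ⨆ ξ : Icc a b, ‖ψ ξ‖ :=
    le_ciSup (image_eq_range _ _ ▸ isCompact_Icc.bddAbove_image hψ.continuousOn.norm)
      (⟨b, right_mem_Icc.2 hab.le⟩ : Icc a b)
  calc _ ≤ 10 * lam ^ (-(1 : ℝ) / 2) * ((∫ ξ in a..b, ‖derivWithin ψ (Icc a b) ξ‖) + ‖ψ b‖) :=
        norm_integral_mul_le_of_norm_primitive_le hab.le
          (by have := hφ.continuousOn; fun_prop)
          (fun x hx => (hψ.differentiableOn one_ne_zero x hx).hasDerivWithinAt)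
          ((hψ.continuousOn_derivWithin hs le_rfl).intervalIntegrable_of_Icc hab.le) hosc
    _ ≤ _ := by gcongr
end

section
/- Let m > 1 and s < 1/2. Then the maximal estimate along the exponentially tangential curve fails: there is no constant C such that ‖ sup_{t∈(0,1)} |S_t^m f(x − (log(1/t))^{−1})| ‖_{L^2((0,1), dμ)} ≤ C ‖f‖_{H^s(ℝ)} for all f ∈ H^s(ℝ), where dμ(x) = |x|^{α−1}dx with 0 < α ≤ 1. Specifically, for the family of data f_λ with f̂_λ = χ_{[0, λ^{1/m}/100]}, the ratio of the left-hand side to ‖f_λ‖_{H^s} tends to infinity as λ → ∞. -/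
/-!
For `0 < x < 1 / log λ` the time `t = exp (-1/x)` puts the curve point `x - (log (1/t))⁻¹` at
the origin, and `t ≤ 1/λ` keeps the phase `t |ξ| ^ m` below `1/2` on the support `[0, N]`,
`N = λ ^ (1/m) / 100`, of `f̂_λ`. Hence there is no cancellation, `|S_t f_λ(0)| ≳ N`, and the
maximal function is `≳ N` on a set of `μ`-measure `≈ (log λ) ^ (-α)`. On the other hand
`‖f_λ‖_{H^s} ≤ N ^ (1/2 + max s 0)`, so the ratio grows like
`λ ^ ((1/2 - max s 0) / m) / (log λ) ^ (α/2)`.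
-/

open MeasureTheory Set Filter

/-- Solution of the 1d fractional Schrödinger equation in terms of the
Fourier transform `fhat` of the initial data. -/
noncomputable def S1 (m : ℝ) (fhat : ℝ → ℂ) (x t : ℝ) : ℂ :=
  ((2 * Real.pi)⁻¹ : ℝ) • ∫ ξ : ℝ, Complex.exp (Complex.I * ((x * ξ + t * |ξ| ^ m : ℝ) : ℂ)) * fhat ξ

/-- The `H^s(ℝ)` norm in terms of the Fourier transform. -/
noncomputable def HsNorm (s : ℝ) (fhat : ℝ → ℂ) : ℝ :=
  ((2 * Real.pi)⁻¹ * ∫ ξ : ℝ, (1 + ξ ^ 2) ^ s * ‖fhat ξ‖ ^ 2) ^ ((1 : ℝ) / 2)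

/-- The weighted `L²((0,1), |x|^{α-1}dx)` norm of the maximal function along the
exponentially tangential curve `x - (log(1/t))⁻¹`. -/
noncomputable def expTangMax (m α : ℝ) (fhat : ℝ → ℂ) : ℝ :=
  (∫ x in Set.Ioo (0:ℝ) 1,
      (⨆ t : Set.Ioo (0:ℝ) 1, ‖S1 m fhat (x - (Real.log (1 / (t:ℝ)))⁻¹) t‖) ^ 2 * |x| ^ (α - 1)) ^
    ((1 : ℝ) / 2)

open Real

namespace ExpTangential

theorem norm_exp_I_mul_ofReal (r : ℝ) : ‖Complex.exp (Complex.I * r)‖ = 1 := by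
  rw [mul_comm, Complex.norm_exp_ofReal_mul_I]

theorem re_exp_I_mul_ofReal (r : ℝ) : (Complex.exp (Complex.I * r)).re = cos r := by
  rw [mul_comm, Complex.exp_ofReal_mul_I_re]

theorem norm_S1_le (m : ℝ) (fhat : ℝ → ℂ) (x t : ℝ) :
    ‖S1 m fhat x t‖ ≤ (2 * π)⁻¹ * ∫ ξ, ‖fhat ξ‖ := by
  rw [S1, norm_smul, Real.norm_of_nonneg (by positivity)]
  gcongr
  refine (norm_integral_le_integral_norm _).trans_eq ?_
  simp only [norm_mul, norm_exp_I_mul_ofReal, one_mul]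

theorem continuous_S1 (m t : ℝ) {fhat : ℝ → ℂ} (hf : Integrable fhat) :
    Continuous fun x => S1 m fhat x t := by
  refine .const_smul (c := ((2 * π)⁻¹ : ℝ)) (continuous_of_dominated (bound := fun ξ => ‖fhat ξ‖)
    (F := fun x ξ => Complex.exp (Complex.I * ((x * ξ + t * |ξ| ^ m : ℝ) : ℂ)) * fhat ξ)
    (fun x => ?_) (fun x => ?_) hf.norm (ae_of_all _ fun ξ => ?_))
  · exact (Measurable.aestronglyMeasurable (by fun_prop)).mul hf.1
  · exact ae_of_all _ fun ξ => by rw [norm_mul, norm_exp_I_mul_ofReal, one_mul]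
  · fun_prop

noncomputable def expTangMaximal (m : ℝ) (fhat : ℝ → ℂ) (x : ℝ) : ℝ :=
  ⨆ t : Ioo (0:ℝ) 1, ‖S1 m fhat (x - (log (1 / (t:ℝ)))⁻¹) t‖

theorem expTangMax_eq_sqrt (m α : ℝ) (fhat : ℝ → ℂ) :
    expTangMax m α fhat =
      √(∫ x in Ioo 0 1, expTangMaximal m fhat x ^ 2 * |x| ^ (α - 1)) := by
  rw [sqrt_eq_rpow]; rfl

section Maximal

variable (m : ℝ) (fhat : ℝ → ℂ) (x : ℝ)

theorem bddAbove_range_norm_S1_curve :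
    BddAbove (range fun t : Ioo (0:ℝ) 1 => ‖S1 m fhat (x - (log (1 / (t:ℝ)))⁻¹) t‖) :=
  ⟨_, forall_mem_range.2 fun _ => norm_S1_le _ _ _ _⟩

theorem expTangMaximal_nonneg : 0 ≤ expTangMaximal m fhat x :=
  iSup_nonneg fun _ => norm_nonneg _

theorem expTangMaximal_le : expTangMaximal m fhat x ≤ (2 * π)⁻¹ * ∫ ξ, ‖fhat ξ‖ :=
  Real.iSup_le (fun _ => norm_S1_le _ _ _ _) (by positivity)

theorem norm_S1_le_expTangMaximal (t : Ioo (0:ℝ) 1) :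
    ‖S1 m fhat (x - (log (1 / (t:ℝ)))⁻¹) t‖ ≤ expTangMaximal m fhat x :=
  le_ciSup (bddAbove_range_norm_S1_curve m fhat x) t

theorem measurable_expTangMaximal {fhat : ℝ → ℂ} (hf : Integrable fhat) :
    Measurable (expTangMaximal m fhat) :=
  (lowerSemicontinuous_ciSup (bddAbove_range_norm_S1_curve m fhat) fun t =>
    ((continuous_S1 m t hf).comp (continuous_id.sub continuous_const)).norm.lowerSemicontinuous)
    |>.measurable

end Maximal

section Weight

variable {α : ℝ}

theorem integrableOn_abs_rpow_sub_one_Ioo (hα : 0 < α) (δ : ℝ) :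
    IntegrableOn (fun x : ℝ => |x| ^ (α - 1)) (Ioo 0 δ) := by
  rcases le_total δ 0 with hδ | hδ
  · simp [Ioo_eq_empty_of_le hδ]
  refine IntegrableOn.congr_fun ?_ (fun x hx => by rw [abs_of_pos hx.1]) measurableSet_Ioo
  exact (intervalIntegrable_iff_integrableOn_Ioo_of_le hδ).1
    (intervalIntegral.intervalIntegrable_rpow' (by linarith))

theorem integral_abs_rpow_sub_one_Ioo (hα : 0 < α) {δ : ℝ} (hδ : 0 ≤ δ) :
    ∫ x in Ioo 0 δ, |x| ^ (α - 1) = δ ^ α / α := by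
  rw [setIntegral_congr_fun measurableSet_Ioo (g := fun x => x ^ (α - 1))
      (fun x hx => by rw [abs_of_pos hx.1]),
    ← integral_Ioc_eq_integral_Ioo, ← intervalIntegral.integral_of_le hδ,
    integral_rpow (Or.inl (by linarith))]
  simp [zero_rpow hα.ne']

end Weight

theorem integrableOn_expTangMaximal_sq_mul {m α : ℝ} {fhat : ℝ → ℂ} (hf : Integrable fhat)
    (hα : 0 < α) :
    IntegrableOn (fun x => expTangMaximal m fhat x ^ 2 * |x| ^ (α - 1)) (Ioo 0 1) := by
  set B := (2 * π)⁻¹ * ∫ ξ, ‖fhat ξ‖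
  refine ((integrableOn_abs_rpow_sub_one_Ioo hα 1).const_mul (B ^ 2)).mono'
    (((measurable_expTangMaximal m hf).pow_const 2).mul (by fun_prop)).aestronglyMeasurable
    (ae_of_all _ fun x => ?_)
  have h0 := expTangMaximal_nonneg m fhat x
  rw [norm_of_nonneg (by positivity)]
  gcongr
  exact expTangMaximal_le m fhat x

theorem mul_sqrt_le_expTangMax {m α δ c : ℝ} {fhat : ℝ → ℂ} (hf : Integrable fhat) (hα : 0 < α)
    (hδ0 : 0 ≤ δ) (hδ1 : δ ≤ 1) (hc : 0 ≤ c)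
    (hlow : ∀ x ∈ Ioo 0 δ, c ≤ expTangMaximal m fhat x) :
    c * √(δ ^ α / α) ≤ expTangMax m α fhat := by
  have hF := integrableOn_expTangMaximal_sq_mul (m := m) hf hα
  rw [expTangMax_eq_sqrt, ← sqrt_sq hc, ← sqrt_mul (sq_nonneg c)]
  gcongr
  calc c ^ 2 * (δ ^ α / α) = ∫ x in Ioo 0 δ, c ^ 2 * |x| ^ (α - 1) := by
        rw [integral_const_mul, integral_abs_rpow_sub_one_Ioo hα hδ0]
    _ ≤ ∫ x in Ioo 0 δ, expTangMaximal m fhat x ^ 2 * |x| ^ (α - 1) := by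
        refine setIntegral_mono_on ((integrableOn_abs_rpow_sub_one_Ioo hα δ).const_mul _)
          (hF.mono_set (Ioo_subset_Ioo_right hδ1)) measurableSet_Ioo fun x hx => ?_
        gcongr
        exact hlow x hx
    _ ≤ ∫ x in Ioo 0 1, expTangMaximal m fhat x ^ 2 * |x| ^ (α - 1) :=
        setIntegral_mono_set hF (ae_of_all _ fun x => by positivity)
          (Ioo_subset_Ioo_right hδ1).eventuallyLE

/-- The Fourier transform `f̂_λ` of the paper's data, with `N = λ ^ (1/m) / 100`. -/
noncomputable def boxData (N : ℝ) : ℝ → ℂ := (Icc 0 N).indicator fun _ => 1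

theorem integrable_boxData (N : ℝ) : Integrable (boxData N) :=
  (integrable_indicator_iff measurableSet_Icc).2 (integrableOn_const measure_Icc_lt_top.ne)

theorem integral_mul_boxData (g : ℝ → ℂ) (N : ℝ) :
    ∫ ξ, g ξ * boxData N ξ = ∫ ξ in Icc 0 N, g ξ := by
  rw [← integral_indicator measurableSet_Icc]
  congr 1 with ξ
  by_cases h : ξ ∈ Icc 0 N <;> simp [boxData, h]

theorem norm_S1_boxData_ge {m N x t : ℝ} (hN : 0 ≤ N)
    (hphase : ∀ ξ ∈ Icc 0 N, |x * ξ + t * |ξ| ^ m| ≤ 1 / 2) :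
    N / 16 ≤ ‖S1 m (boxData N) x t‖ := by
  set phase := fun ξ : ℝ => x * ξ + t * |ξ| ^ m
  have hint : IntegrableOn (fun ξ => Complex.exp (Complex.I * (phase ξ : ℂ))) (Icc 0 N) :=
    Integrable.of_bound (μ := volume.restrict (Icc 0 N))
      (Measurable.aestronglyMeasurable (by fun_prop)) 1
      (ae_of_all _ fun ξ => (norm_exp_I_mul_ofReal _).le)
  have hcos : N / 2 ≤ ∫ ξ in Icc 0 N, cos (phase ξ) := by
    have hint_cos : IntegrableOn (fun ξ => cos (phase ξ)) (Icc 0 N) :=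
      IntegrableOn.congr_fun hint.re (fun ξ _ => re_exp_I_mul_ofReal _) measurableSet_Icc
    calc N / 2 = 1 / 2 * volume.real (Icc 0 N) := by
          rw [volume_real_Icc_of_le hN, sub_zero]; ring
      _ ≤ _ := setIntegral_ge_of_const_le_real measurableSet_Icc measure_Icc_lt_top.ne
          (fun ξ hξ => ?_) hint_cos
    -- no cancellation: `cos (phase ξ) ≥ 1 - phase ξ ^ 2 / 2 ≥ 7 / 8` on the support
    have := abs_le.1 (hphase ξ hξ)
    nlinarith [one_sub_sq_div_two_le_cos (x := phase ξ)]
  have hpi : (1 / 8 : ℝ) ≤ (2 * π)⁻¹ := by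
    rw [one_div]; exact inv_anti₀ (by positivity) (by linarith [pi_le_four])
  calc N / 16 = 1 / 8 * (N / 2) := by ring
    _ ≤ (2 * π)⁻¹ * ∫ ξ in Icc 0 N, cos (phase ξ) := by gcongr
    _ = (S1 m (boxData N) x t).re := by
        rw [S1, Complex.smul_re]
        rw [integral_mul_boxData, ← RCLike.re_to_complex, ← integral_re hint]
        simp only [RCLike.re_to_complex, re_exp_I_mul_ofReal]
        rfl
    _ ≤ ‖S1 m (boxData N) x t‖ := Complex.re_le_norm _

/-- At time `t = exp (-1/x)` the curve passes through the origin, and `t ≤ 1/L` keeps the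
phase `t ξ ^ m` below `1/2` on `[0, N]`. -/
theorem expTangMaximal_boxData_ge {m N L x : ℝ} (hm : 0 ≤ m) (hN : 0 ≤ N)
    (hNL : 2 * N ^ m ≤ L) (hx : x ∈ Ioo 0 (log L)⁻¹) :
    N / 16 ≤ expTangMaximal m (boxData N) x := by
  have hlogL : 0 < log L := inv_pos.1 (hx.1.trans hx.2)
  have hL : 0 < L := lt_of_le_of_ne (by linarith [rpow_nonneg hN m])
    (by rintro rfl; simp at hlogL)
  set t := exp (-x⁻¹)
  have ht : t ∈ Ioo 0 1 := ⟨exp_pos _, exp_lt_one_iff.2 (neg_neg_of_pos (inv_pos.2 hx.1))⟩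
  have hcurve : x - (log (1 / t))⁻¹ = 0 := by simp [t]
  have htL : t * L ≤ 1 := by
    have : log L ≤ x⁻¹ := by rw [← inv_inv (log L)]; exact inv_anti₀ hx.1 hx.2.le
    calc t * L = exp (log L - x⁻¹) := by
          rw [exp_sub, exp_log hL, div_eq_mul_inv, ← exp_neg, mul_comm L]
      _ ≤ 1 := exp_le_one_iff.2 (by linarith)
  refine (norm_S1_boxData_ge hN fun ξ hξ => ?_).trans
    (hcurve ▸ norm_S1_le_expTangMaximal m (boxData N) x ⟨t, ht⟩)
  have hξN : |ξ| ^ m ≤ N ^ m :=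
    rpow_le_rpow (abs_nonneg ξ) (abs_le.2 ⟨by linarith [hξ.1], hξ.2⟩) hm
  rw [zero_mul, zero_add, abs_of_nonneg (by positivity)]
  nlinarith [ht.1.le, rpow_nonneg (abs_nonneg ξ) m]

theorem HsNorm_nonneg (s : ℝ) (fhat : ℝ → ℂ) : 0 ≤ HsNorm s fhat :=
  rpow_nonneg (mul_nonneg (by positivity) (integral_nonneg fun ξ => by positivity)) _

theorem HsNorm_boxData (s N : ℝ) :
    HsNorm s (boxData N) = √((2 * π)⁻¹ * ∫ ξ in Icc 0 N, (1 + ξ ^ 2) ^ s) := by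
  rw [HsNorm, sqrt_eq_rpow, ← integral_indicator measurableSet_Icc]
  congr 3 with ξ
  by_cases h : ξ ∈ Icc 0 N <;> simp [boxData, h]

theorem continuous_one_add_sq_rpow (s : ℝ) : Continuous fun ξ : ℝ => (1 + ξ ^ 2) ^ s :=
  (continuous_const.add (continuous_pow 2)).rpow_const
    fun ξ => Or.inl (by show 1 + ξ ^ 2 ≠ (0 : ℝ); positivity)

theorem HsNorm_boxData_pos (s : ℝ) {N : ℝ} (hN : 0 < N) : 0 < HsNorm s (boxData N) := by
  rw [HsNorm_boxData, sqrt_pos, integral_Icc_eq_integral_Ioc,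
    ← intervalIntegral.integral_of_le hN.le]
  refine mul_pos (by positivity) (intervalIntegral.intervalIntegral_pos_of_pos_on ?_
    (fun ξ _ => by positivity) hN)
  exact (continuous_one_add_sq_rpow s).intervalIntegrable _ _

theorem HsNorm_boxData_le {s σ N : ℝ} (hsσ : s ≤ σ) (hσ0 : 0 ≤ σ) (hσ1 : σ ≤ 1) (hN : 1 ≤ N) :
    HsNorm s (boxData N) ≤ N ^ (1 / 2 + σ) := by
  have hN0 : 0 ≤ N := by linarith
  have hpow : (N ^ (1 / 2 + σ)) ^ 2 = N * N ^ (2 * σ) := by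
    rw [← rpow_natCast, ← rpow_mul hN0, ← rpow_one_add' hN0 (by positivity)]
    norm_num [mul_add, mul_comm]
  have h2σ : (2 : ℝ) ^ σ ≤ 2 := by simpa using rpow_le_rpow_of_exponent_le one_le_two hσ1
  rw [HsNorm_boxData, sqrt_le_iff, hpow]
  refine ⟨by positivity, ?_⟩
  calc (2 * π)⁻¹ * ∫ ξ in Icc 0 N, (1 + ξ ^ 2) ^ s
      ≤ (2 * π)⁻¹ * ∫ _ in Icc 0 N, 2 * N ^ (2 * σ) := by
        refine mul_le_mul_of_nonneg_left (setIntegral_mono_on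
          (continuous_one_add_sq_rpow s).integrableOn_Icc
          (integrableOn_const (measure_Icc_lt_top (μ := volume)).ne) measurableSet_Icc
          fun ξ hξ => ?_) (by positivity)
        calc (1 + ξ ^ 2) ^ s ≤ (1 + ξ ^ 2) ^ σ := rpow_le_rpow_of_exponent_le (by nlinarith) hsσ
          _ ≤ (2 * N ^ 2) ^ σ := by gcongr; nlinarith [hξ.1, hξ.2]
          _ = 2 ^ σ * N ^ (2 * σ) := by
            rw [mul_rpow zero_le_two (by positivity), rpow_mul hN0]; norm_cast
          _ ≤ 2 * N ^ (2 * σ) := by gcongr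
    _ ≤ N * N ^ (2 * σ) := by
        rw [setIntegral_const, volume_real_Icc_of_le hN0, sub_zero, smul_eq_mul]
        have : (2 * π)⁻¹ * 2 ≤ 1 := by
          rw [inv_mul_le_iff₀ (by positivity)]; linarith [pi_gt_three]
        nlinarith [rpow_nonneg hN0 (2 * σ)]

theorem expTangMax_div_HsNorm_boxData_ge {m s α σ N L : ℝ} (hm : 0 ≤ m) (hα : 0 < α)
    (hsσ : s ≤ σ) (hσ0 : 0 ≤ σ) (hσ1 : σ ≤ 1) (hN : 1 ≤ N) (hNL : 2 * N ^ m ≤ L)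
    (hlogL : 1 ≤ log L) :
    N ^ (1 / 2 - σ) * √((log L)⁻¹ ^ α / α) / 16 ≤
      expTangMax m α (boxData N) / HsNorm s (boxData N) := by
  have hN0 : 0 < N := by linarith
  have hE : N / 16 * √((log L)⁻¹ ^ α / α) ≤ expTangMax m α (boxData N) :=
    mul_sqrt_le_expTangMax (integrable_boxData N) hα (by positivity)
      (inv_le_one_of_one_le₀ hlogL) (by positivity)
      fun x hx => expTangMaximal_boxData_ge hm hN0.le hNL hx
  calc N ^ (1 / 2 - σ) * √((log L)⁻¹ ^ α / α) / 16
      = N / 16 * √((log L)⁻¹ ^ α / α) / N ^ (1 / 2 + σ) := by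
        rw [show 1 / 2 - σ = 1 - (1 / 2 + σ) by ring, rpow_sub hN0, rpow_one]; ring
    _ ≤ _ := div_le_div₀ ((by positivity : (0:ℝ) ≤ _).trans hE) hE (HsNorm_boxData_pos s hN0)
        (HsNorm_boxData_le hsσ hσ0 hσ1 hN)

theorem two_mul_rpow_le {m L : ℝ} (hm : 1 ≤ m) (hL : 0 ≤ L) :
    2 * (L ^ (1 / m) / 100) ^ m ≤ L := by
  have h100 : (100 : ℝ) ≤ 100 ^ m := by
    simpa using rpow_le_rpow_of_exponent_le (by norm_num : (1 : ℝ) ≤ 100) hm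
  rw [div_rpow (rpow_nonneg hL _) (by norm_num), ← rpow_mul hL,
    one_div_mul_cancel (by positivity), rpow_one, mul_div_assoc', div_le_iff₀ (by positivity)]
  nlinarith

theorem tendsto_rpow_div_log_rpow_atTop {a : ℝ} (ha : 0 < a) (b : ℝ) :
    Tendsto (fun x => x ^ a / log x ^ b) atTop atTop := by
  have hpos : ∀ᶠ x in atTop, 0 < log x ^ b / x ^ a := by
    filter_upwards [eventually_gt_atTop 1] with x hx
    have := log_pos hx
    positivity
  simpa only [Pi.inv_def, inv_div] using (tendsto_nhdsWithin_iff.2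
    ⟨(isLittleO_log_rpow_rpow_atTop b ha).tendsto_div_nhds_zero, hpos⟩).inv_tendsto_nhdsGT_zero

theorem not_exists_le_mul_of_tendsto_div {X ι : Type*} {l : Filter ι} [l.NeBot] {P : X → Prop}
    {E H : X → ℝ} (hH : ∀ x, 0 ≤ H x) {f : ι → X} (hf : ∀ i, P (f i))
    (h : Tendsto (fun i => E (f i) / H (f i)) l atTop) :
    ¬ ∃ C : ℝ, 0 < C ∧ ∀ x, P x → E x ≤ C * H x := by
  rintro ⟨C, hC, hEH⟩
  obtain ⟨i, hi⟩ := (h.eventually_gt_atTop C).exists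
  exact hi.not_ge (div_le_of_le_mul₀ (hH _) hC.le (hEH _ (hf i)))

end ExpTangential

open ExpTangential in
theorem expTang_maximal_fails_general (m s α : ℝ) (hm : 1 < m) (hs : s < 1/2)
    (hα0 : 0 < α) :
    (¬ ∃ C : ℝ, 0 < C ∧ ∀ fhat : ℝ → ℂ, Integrable fhat →
        expTangMax m α fhat ≤ C * HsNorm s fhat)
    ∧ Tendsto
        (fun lam : ℝ =>
          expTangMax m α (Set.indicator (Set.Icc 0 (lam ^ (1/m) / 100)) (fun _ => (1:ℂ))) /
            HsNorm s (Set.indicator (Set.Icc 0 (lam ^ (1/m) / 100)) (fun _ => (1:ℂ))))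
        atTop atTop := by
  have he : 0 < 1 / 2 - max s 0 := sub_pos.2 (max_lt hs (by norm_num))
  have hratio : Tendsto (fun L : ℝ => expTangMax m α (boxData (L ^ (1 / m) / 100)) /
      HsNorm s (boxData (L ^ (1 / m) / 100))) atTop atTop := by
    refine tendsto_atTop_mono' _ ?_
      ((tendsto_rpow_div_log_rpow_atTop (by positivity : 0 < (1 / 2 - max s 0) / m) (α / 2))
        |>.const_mul_atTop (by positivity : 0 < (16 * 100 ^ (1 / 2 - max s 0) * √α)⁻¹))
    filter_upwards [eventually_ge_atTop 0,
      (tendsto_rpow_atTop (by positivity : 0 < 1 / m)).eventually_ge_atTop 100,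
      tendsto_log_atTop.eventually_ge_atTop 1] with L hL hL100 hlogL
    refine le_of_eq_of_le ?_ (expTangMax_div_HsNorm_boxData_ge (by positivity) hα0
      (le_max_left s 0) (le_max_right s 0) (by linarith) (by linarith) (two_mul_rpow_le hm.le hL)
      hlogL)
    have hlog : √((log L)⁻¹ ^ α) = (log L ^ (α / 2))⁻¹ := by
      rw [sqrt_eq_rpow, ← rpow_mul (by positivity), inv_rpow (by positivity)]; ring_nf
    rw [div_rpow (rpow_nonneg hL _) (by norm_num), ← rpow_mul hL, sqrt_div' _ hα0.le, hlog,
      one_div_mul_eq_div]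
    field_simp
  exact ⟨not_exists_le_mul_of_tendsto_div (HsNorm_nonneg s) (fun _ => integrable_boxData _)
    hratio, hratio⟩

theorem expTang_maximal_fails (m s α : ℝ) (hm : 1 < m) (hs : s < 1/2)
    (hα0 : 0 < α) (hα1 : α ≤ 1) :
    (¬ ∃ C : ℝ, 0 < C ∧ ∀ fhat : ℝ → ℂ, Integrable fhat →
        expTangMax m α fhat ≤ C * HsNorm s fhat)
    ∧ Tendsto
        (fun lam : ℝ =>
          expTangMax m α (Set.indicator (Set.Icc 0 (lam ^ (1/m) / 100)) (fun _ => (1:ℂ))) /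
            HsNorm s (Set.indicator (Set.Icc 0 (lam ^ (1/m) / 100)) (fun _ => (1:ℂ))))
        atTop atTop :=
  expTang_maximal_fails_general m s α hm hs hα0
end

section
/- Let d = 1, m > 1, q ≥ 1, r ∈ (0,1/2), and let Θ = C(r) be the r-Cantor set, with β = log 2/ log(1/r) ∈ (0,1) its Minkowski dimension. If s < 1/2 − 1/q + β/q, then the maximal estimate ‖ sup_{t∈(0,1), θ∈Θ} |S_t^m f(x + tθ)| ‖_{L^q((−1,1))} ≤ C‖f‖_{H^s(ℝ)} fails; explicitly, for f_λ with f̂_λ(ξ) = e^{−i|ξ|^m} χ_{[0,cλ]}(ξ) and λ = r^{−k}, the left-hand side is ≳ 2^{k/q} λ^{1−1/q} = λ^{β/q + 1 − 1/q}, while ‖f_λ‖_{H^s} ≲ λ^{s + 1/2}, yielding a contradiction as λ → ∞. -/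
open MeasureTheory Set

def preCantor (r : ℝ) : ℕ → Set ℝ
  | 0 => Set.Icc 0 1
  | (k+1) => (fun x => r * x) '' preCantor r k ∪ (fun x => r * x + (1 - r)) '' preCantor r k

def rCantorSet (r : ℝ) : Set ℝ := ⋂ k, preCantor r k

/-!
Knapp-type counterexample. Put `f̂ = e^{-i|ξ|^m}` on the band `[λ/4, λ/2]`, `λ = r^{-k}`. At time
`t = 1 - τ` with `τ ≍ λ^{-m}` the evolution cancels the chirp, and the phase of
`S_t f (x + tθ)` stays below `1` on the band as soon as `|x + θ| ≤ λ⁻¹`; there `|S_t f| ≳ λ`.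
Each point of the `k`-th generation `C_k(r)` lies within `r^k = λ⁻¹` of the Cantor set, so the
maximal function is `≳ λ` on `-C_k(r)`, a set of measure `(2r)^k = λ^{β-1}`. Hence the left side
is `≳ λ^{1 + (β-1)/q}`, while `‖f‖_{H^s} ≲ λ^{s+1/2}` (on the band `1 + ξ² ≍ λ²`, whatever the
sign of `s`), and `s + 1/2 < 1 + (β-1)/q`.
-/

open Filter
open scoped Pointwise
open Complex (I)

lemma Real.volume_image_mul_add (a c : ℝ) (s : Set ℝ) :
    volume ((fun x => a * x + c) '' s) = ENNReal.ofReal |a| * volume s := by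
  have : (fun x => a * x + c) '' s = (fun x => x + c) '' (a • s) := by
    rw [← image_smul, image_image]; rfl
  rw [this, image_add_right, measure_preimage_add_right, Measure.addHaar_smul]
  simp

section Cantor

variable {r : ℝ}

lemma isCompact_preCantor (r : ℝ) (k : ℕ) : IsCompact (preCantor r k) := by
  induction k with
  | zero => exact isCompact_Icc
  | succ k ih => exact (ih.image (by fun_prop)).union (ih.image (by fun_prop))

lemma preCantor_subset_Icc (hr0 : 0 ≤ r) (hr1 : r ≤ 1) (k : ℕ) : preCantor r k ⊆ Icc 0 1 := by
  induction k with
  | zero => exact subset_rfl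
  | succ k ih =>
    rintro _ (⟨y, hy, rfl⟩ | ⟨y, hy, rfl⟩) <;> obtain ⟨h0, h1⟩ := ih hy <;>
      constructor <;> nlinarith

lemma preCantor_succ_subset (hr0 : 0 ≤ r) (hr1 : r ≤ 1) (k : ℕ) :
    preCantor r (k + 1) ⊆ preCantor r k := by
  induction k with
  | zero => exact preCantor_subset_Icc hr0 hr1 1
  | succ k ih => exact union_subset_union (image_mono ih) (image_mono ih)

lemma zero_mem_rCantorSet (r : ℝ) : (0 : ℝ) ∈ rCantorSet r := by
  refine mem_iInter.2 fun k => ?_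
  induction k with
  | zero => exact ⟨le_rfl, zero_le_one⟩
  | succ k ih => exact Or.inl ⟨0, ih, mul_zero r⟩

lemma mul_mem_rCantorSet (hr0 : 0 ≤ r) (hr1 : r ≤ 1) {θ : ℝ} (hθ : θ ∈ rCantorSet r) :
    r * θ ∈ rCantorSet r :=
  mem_iInter.2 fun k => preCantor_succ_subset hr0 hr1 k (Or.inl ⟨θ, mem_iInter.1 hθ k, rfl⟩)

lemma mul_add_one_sub_mem_rCantorSet (hr0 : 0 ≤ r) (hr1 : r ≤ 1) {θ : ℝ}
    (hθ : θ ∈ rCantorSet r) : r * θ + (1 - r) ∈ rCantorSet r :=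
  mem_iInter.2 fun k => preCantor_succ_subset hr0 hr1 k (Or.inr ⟨θ, mem_iInter.1 hθ k, rfl⟩)

lemma rCantorSet_subset_Icc (r : ℝ) : rCantorSet r ⊆ Icc 0 1 :=
  iInter_subset _ 0

lemma exists_mem_rCantorSet_abs_sub_le (hr0 : 0 ≤ r) (hr1 : r ≤ 1) {k : ℕ} {y : ℝ}
    (hy : y ∈ preCantor r k) : ∃ θ ∈ rCantorSet r, |y - θ| ≤ r ^ k := by
  induction k generalizing y with
  | zero => exact ⟨0, zero_mem_rCantorSet r, by simpa [abs_of_nonneg hy.1] using hy.2⟩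
  | succ k ih =>
    rcases hy with ⟨z, hz, rfl⟩ | ⟨z, hz, rfl⟩ <;> obtain ⟨θ, hθ, hzθ⟩ := ih hz
    · refine ⟨r * θ, mul_mem_rCantorSet hr0 hr1 hθ, ?_⟩
      rw [← mul_sub, abs_mul, abs_of_nonneg hr0, pow_succ']
      gcongr
    · refine ⟨r * θ + (1 - r), mul_add_one_sub_mem_rCantorSet hr0 hr1 hθ, ?_⟩
      rw [add_sub_add_right_eq_sub, ← mul_sub, abs_mul, abs_of_nonneg hr0, pow_succ']
      gcongr

lemma volume_preCantor (hr0 : 0 < r) (hr : r < 1 / 2) (k : ℕ) :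
    volume (preCantor r k) = ENNReal.ofReal ((2 * r) ^ k) := by
  induction k with
  | zero => simp [preCantor]
  | succ k ih =>
    -- the left copy lies in `[0, r]`, the right one in `[1 - r, 1]`
    have hdisj : Disjoint ((fun x => r * x) '' preCantor r k)
        ((fun x => r * x + (1 - r)) '' preCantor r k) := by
      refine disjoint_left.2 ?_
      rintro _ ⟨y, hy, rfl⟩ ⟨z, hz, hyz⟩
      have := preCantor_subset_Icc hr0.le (by linarith) k hy
      have := preCantor_subset_Icc hr0.le (by linarith) k hz
      simp only [mem_Icc] at *
      nlinarith
    have hvol := Real.volume_image_mul_add r 0 (preCantor r k)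
    simp only [add_zero] at hvol
    rw [preCantor,
      measure_union hdisj ((isCompact_preCantor r k).image (by fun_prop)).measurableSet,
      hvol, Real.volume_image_mul_add, ih, abs_of_pos hr0, ← two_mul,
      ← ENNReal.ofReal_mul hr0.le, ← ENNReal.ofReal_ofNat 2, ← ENNReal.ofReal_mul zero_le_two]
    ring_nf

end Cantor

lemma le_norm_setIntegral_exp_mul_I {α : Type*} [MeasurableSpace α] {μ : Measure α}
    {s : Set α} (hs : MeasurableSet s) (hμs : μ s ≠ ⊤) {φ : α → ℝ} (hφ : Measurable φ)
    (hφs : ∀ x ∈ s, |φ x| ≤ 1) :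
    μ.real s / 2 ≤ ‖∫ x in s, Complex.exp (φ x * I) ∂μ‖ := by
  have hcos : ∀ x ∈ s, 1 / 2 ≤ Real.cos (φ x) := fun x hx => by
    nlinarith [Real.one_sub_sq_div_two_le_cos (x := φ x), abs_le.1 (hφs x hx), sq_abs (φ x)]
  have hint : IntegrableOn (fun x => Complex.exp (φ x * I)) s μ :=
    Measure.integrableOn_of_bounded (M := 1) hμs (by fun_prop)
      (ae_of_all _ fun x => (Complex.norm_exp_ofReal_mul_I _).le)
  calc μ.real s / 2 = 1 / 2 * μ.real s := by ring
    _ ≤ ∫ x in s, Real.cos (φ x) ∂μ := setIntegral_ge_of_const_le_real hs hμs hcos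
      (by simpa only [IntegrableOn, RCLike.re_to_complex, Complex.exp_ofReal_mul_I_re]
        using hint.re)
    _ = (∫ x in s, Complex.exp (φ x * I) ∂μ).re := by
      rw [← RCLike.re_to_complex, ← integral_re hint]; simp [Complex.exp_ofReal_mul_I_re]
    _ ≤ ‖∫ x in s, Complex.exp (φ x * I) ∂μ‖ := Complex.re_le_norm _

lemma mul_measureReal_rpow_le_setIntegral_rpow {α : Type*} [MeasurableSpace α] {μ : Measure α}
    {F : α → ℝ} {A s : Set α} {c q : ℝ} (hc : 0 ≤ c) (hq : 0 < q) (hF : 0 ≤ F)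
    (hA : MeasurableSet A) (hAs : A ⊆ s) (hμA : μ A ≠ ⊤) (hcF : ∀ x ∈ A, c ≤ F x)
    (hint : IntegrableOn (fun x => F x ^ q) s μ) :
    c * μ.real A ^ (1 / q) ≤ (∫ x in s, F x ^ q ∂μ) ^ (1 / q) := by
  have h : c ^ q * μ.real A ≤ ∫ x in s, F x ^ q ∂μ :=
    (setIntegral_ge_of_const_le_real hA hμA
      (fun x hx => Real.rpow_le_rpow hc (hcF x hx) hq.le) (hint.mono_set hAs)).trans
    (setIntegral_mono_set hint (ae_of_all _ fun x => Real.rpow_nonneg (hF x) q)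
      hAs.eventuallyLE)
  calc c * μ.real A ^ (1 / q) = (c ^ q * μ.real A) ^ (1 / q) := by
        rw [Real.mul_rpow (by positivity) measureReal_nonneg, ← Real.rpow_mul hc,
          mul_one_div_cancel hq.ne', Real.rpow_one]
    _ ≤ _ := by gcongr

lemma rpow_le_rpow_abs_mul_rpow {u v c s : ℝ} (hv : 0 < v) (hc : 1 ≤ c)
    (hu : u ∈ Icc (v / c) (c * v)) : u ^ s ≤ c ^ |s| * v ^ s := by
  have hc0 : 0 < c := by linarith
  have hu0 : 0 < u := lt_of_lt_of_le (by positivity) hu.1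
  rcases le_or_gt 0 s with hs | hs
  · calc u ^ s ≤ (c * v) ^ s := Real.rpow_le_rpow hu0.le hu.2 hs
      _ = c ^ |s| * v ^ s := by rw [abs_of_nonneg hs, Real.mul_rpow hc0.le hv.le]
  · calc u ^ s ≤ (v / c) ^ s := Real.rpow_le_rpow_of_nonpos (by positivity) hu.1 hs.le
      _ = c ^ |s| * v ^ s := by
        rw [abs_of_neg hs, Real.div_rpow hv.le hc0.le, Real.rpow_neg hc0.le]; ring

lemma eventually_mul_rpow_lt_mul_rpow {a b c : ℝ} (hba : b < a) (hc : 0 < c) (D : ℝ) :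
    ∀ᶠ x in atTop, D * x ^ b < c * x ^ a := by
  filter_upwards [(tendsto_rpow_atTop (sub_pos.2 hba)).eventually_gt_atTop (D / c),
    eventually_gt_atTop 0] with x hx hx0
  calc D * x ^ b = D / c * (c * x ^ b) := by field_simp
    _ < x ^ (a - b) * (c * x ^ b) := by gcongr
    _ = c * x ^ a := by rw [Real.rpow_sub hx0]; field_simp

lemma norm_S1_le (m : ℝ) (fhat : ℝ → ℂ) (x t : ℝ) :
    ‖S1 m fhat x t‖ ≤ (2 * Real.pi)⁻¹ * ∫ ξ, ‖fhat ξ‖ := by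
  rw [S1, norm_smul, Real.norm_of_nonneg (by positivity)]
  gcongr
  refine (norm_integral_le_integral_norm _).trans_eq ?_
  simp only [norm_mul, Complex.norm_exp_I_mul_ofReal, one_mul]

lemma continuous_S1 {fhat : ℝ → ℂ} (hf : Integrable fhat) (m t : ℝ) :
    Continuous fun x => S1 m fhat x t := by
  refine Continuous.const_smul (c := ((2 * Real.pi)⁻¹ : ℝ)) <| continuous_of_dominated
    (F := fun x ξ => Complex.exp (I * ((x * ξ + t * |ξ| ^ m : ℝ) : ℂ)) * fhat ξ)
    (bound := fun ξ => ‖fhat ξ‖) (fun x => ?_) (fun x => ae_of_all _ fun ξ => ?_) hf.norm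
    (ae_of_all _ fun ξ => by fun_prop)
  · exact (by measurability : Measurable _).aestronglyMeasurable.mul hf.1
  · simp only [norm_mul, Complex.norm_exp_I_mul_ofReal, one_mul, le_refl]

noncomputable def cantorMaximal (m r : ℝ) (fhat : ℝ → ℂ) (x : ℝ) : ℝ :=
  ⨆ (t : Ioo (0 : ℝ) 1) (θ : rCantorSet r), ‖S1 m fhat (x + t * θ) t‖

section cantorMaximal

variable {m r : ℝ} {fhat : ℝ → ℂ}

lemma iSup_norm_S1_le (x t : ℝ) :
    ⨆ θ : rCantorSet r, ‖S1 m fhat (x + t * θ) t‖ ≤ (2 * Real.pi)⁻¹ * ∫ ξ, ‖fhat ξ‖ :=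
  Real.iSup_le (fun _ => norm_S1_le m fhat _ _) (by positivity)

lemma cantorMaximal_nonneg (x : ℝ) : 0 ≤ cantorMaximal m r fhat x :=
  Real.iSup_nonneg fun _ => Real.iSup_nonneg fun _ => norm_nonneg _

lemma cantorMaximal_le (x : ℝ) :
    cantorMaximal m r fhat x ≤ (2 * Real.pi)⁻¹ * ∫ ξ, ‖fhat ξ‖ :=
  Real.iSup_le (fun _ => iSup_norm_S1_le x _) (by positivity)

lemma norm_S1_le_cantorMaximal {t θ : ℝ} (ht : t ∈ Ioo 0 1) (hθ : θ ∈ rCantorSet r) (x : ℝ) :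
    ‖S1 m fhat (x + t * θ) t‖ ≤ cantorMaximal m r fhat x :=
  le_ciSup_of_le ⟨_, forall_mem_range.2 fun t => iSup_norm_S1_le x t⟩ ⟨t, ht⟩ <|
    le_ciSup (f := fun θ : rCantorSet r => ‖S1 m fhat (x + t * θ) t‖)
      ⟨_, forall_mem_range.2 fun _ => norm_S1_le m fhat _ _⟩ ⟨θ, hθ⟩

lemma measurable_cantorMaximal (hf : Integrable fhat) : Measurable (cantorMaximal m r fhat) := by
  refine LowerSemicontinuous.measurable <| lowerSemicontinuous_ciSup
    (fun x => ⟨_, forall_mem_range.2 fun t => iSup_norm_S1_le x t⟩) fun t =>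
    lowerSemicontinuous_ciSup (fun x => ⟨_, forall_mem_range.2 fun _ => norm_S1_le m fhat _ _⟩)
    fun θ => ?_
  exact ((continuous_S1 hf m t).comp (continuous_add_const _)).norm.lowerSemicontinuous

lemma integrableOn_cantorMaximal_rpow (hf : Integrable fhat) {q : ℝ} (hq : 0 ≤ q) {s : Set ℝ}
    (hs : volume s ≠ ⊤) : IntegrableOn (fun x => cantorMaximal m r fhat x ^ q) s :=
  Measure.integrableOn_of_bounded hs
    ((measurable_cantorMaximal hf).pow_const q).aestronglyMeasurable
    (ae_of_all _ fun x => by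
      rw [Real.norm_of_nonneg (Real.rpow_nonneg (cantorMaximal_nonneg x) q)]
      exact Real.rpow_le_rpow (cantorMaximal_nonneg x) (cantorMaximal_le x) hq)

end cantorMaximal

-- The paper's `f̂_λ`, with the band `[a, b]` in place of `[0, cλ]`.
noncomputable def knappSymbol (m a b : ℝ) : ℝ → ℂ :=
  (Icc a b).indicator fun ξ => Complex.exp ((-|ξ| ^ m : ℝ) * I)

lemma norm_knappSymbol (m a b ξ : ℝ) : ‖knappSymbol m a b ξ‖ = (Icc a b).indicator 1 ξ := by
  by_cases h : ξ ∈ Icc a b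
  · simp only [knappSymbol, indicator_of_mem h, Complex.norm_exp_ofReal_mul_I, Pi.one_apply]
  · simp [knappSymbol, h]

lemma integrable_knappSymbol (m a b : ℝ) : Integrable (knappSymbol m a b) := by
  refine (integrable_indicator_iff measurableSet_Icc).2 <|
    Measure.integrableOn_of_bounded (M := 1) measure_Icc_lt_top.ne
      (Measurable.cexp (by fun_prop)).aestronglyMeasurable
      (ae_of_all _ fun ξ => (Complex.norm_exp_ofReal_mul_I _).le)

lemma S1_knappSymbol (m a b x t : ℝ) :
    S1 m (knappSymbol m a b) x t =
      ((2 * Real.pi)⁻¹ : ℝ) •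
        ∫ ξ in Icc a b, Complex.exp ((x * ξ + (t - 1) * |ξ| ^ m : ℝ) * I) := by
  rw [S1, ← integral_indicator measurableSet_Icc]
  congr 2 with ξ
  by_cases h : ξ ∈ Icc a b
  · simp only [knappSymbol, indicator_of_mem h, ← Complex.exp_add]
    congr 1; push_cast; ring
  · simp [knappSymbol, h]

lemma le_norm_S1_knappSymbol {m a b x t : ℝ} (hab : a ≤ b)
    (hphase : ∀ ξ ∈ Icc a b, |x * ξ + (t - 1) * |ξ| ^ m| ≤ 1) :
    (b - a) / (4 * Real.pi) ≤ ‖S1 m (knappSymbol m a b) x t‖ := by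
  have h := le_norm_setIntegral_exp_mul_I measurableSet_Icc
    (measure_Icc_lt_top (μ := volume)).ne (by fun_prop) hphase
  rw [Real.volume_real_Icc_of_le hab] at h
  rw [S1_knappSymbol, norm_smul, Real.norm_of_nonneg (by positivity)]
  calc (b - a) / (4 * Real.pi) = (2 * Real.pi)⁻¹ * ((b - a) / 2) := by
        field_simp; ring
    _ ≤ _ := by gcongr

lemma abs_knapp_phase_le_one {m L τ x θ ξ : ℝ} (hm : 1 ≤ m) (hL : 1 ≤ L) (hτ : 0 ≤ τ)
    (hτL : τ * L ^ m ≤ 1 / 4) (hθ : θ ∈ Icc 0 1) (hxθ : |x + θ| ≤ L⁻¹)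
    (hξ : ξ ∈ Icc (L / 4) (L / 2)) :
    |(x + (1 - τ) * θ) * ξ + (1 - τ - 1) * |ξ| ^ m| ≤ 1 := by
  obtain ⟨hξ0, hξL⟩ := hξ
  have hξ : 0 ≤ ξ := by linarith
  have hξm : ξ ^ m ≤ L ^ m := Real.rpow_le_rpow hξ (by linarith) (by linarith)
  have hLm : L ≤ L ^ m := Real.self_le_rpow_of_one_le hL hm
  have h1 : |(x + θ) * ξ| ≤ 1 / 2 := by
    rw [abs_mul, abs_of_nonneg hξ]
    calc |x + θ| * ξ ≤ L⁻¹ * (L / 2) := by gcongr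
      _ = 1 / 2 := by field_simp
  have h2 : τ * θ * ξ ≤ 1 / 4 := by
    calc τ * θ * ξ ≤ τ * 1 * L ^ m := by gcongr; exacts [hθ.2, by linarith]
      _ ≤ 1 / 4 := by linarith
  have h3 : τ * ξ ^ m ≤ 1 / 4 := by
    calc τ * ξ ^ m ≤ τ * L ^ m := by gcongr
      _ ≤ 1 / 4 := hτL
  have h2' : 0 ≤ τ * θ * ξ := by have := hθ.1; positivity
  have h3' : 0 ≤ τ * ξ ^ m := by positivity
  rw [abs_le] at h1
  rw [abs_of_nonneg hξ, abs_le]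
  constructor <;> nlinarith

lemma le_cantorMaximal_knappSymbol {m r L x θ : ℝ} (hm : 1 ≤ m) (hL : 1 ≤ L)
    (hθ : θ ∈ rCantorSet r) (hxθ : |x + θ| ≤ L⁻¹) :
    L / (16 * Real.pi) ≤ cantorMaximal m r (knappSymbol m (L / 4) (L / 2)) x := by
  have hLm : 1 ≤ L ^ m := Real.one_le_rpow hL (by linarith)
  -- over the time `τ ≍ L^{-m}` the dispersion at frequencies `≤ L` moves the phase by `O(1)`
  set τ := (L ^ m)⁻¹ / 4
  have hτ : 0 < τ := by positivity
  have hτ1 : τ ≤ 1 / 4 := by simp only [τ]; linarith [inv_le_one_of_one_le₀ hLm]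
  have hτL : τ * L ^ m = 1 / 4 := by simp only [τ]; field_simp
  have ht : 1 - τ ∈ Ioo 0 1 := ⟨by linarith, by linarith⟩
  refine le_trans (le_of_eq ?_) <| (le_norm_S1_knappSymbol (by linarith) fun ξ hξ =>
    abs_knapp_phase_le_one hm hL hτ.le hτL.le (rCantorSet_subset_Icc r hθ) hxθ hξ).trans
    (norm_S1_le_cantorMaximal ht hθ x)
  ring

lemma knapp_maximal_lower_bound {m q r : ℝ} (hm : 1 ≤ m) (hq : 0 < q) (hr0 : 0 < r)
    (hr : r < 1 / 2) (k : ℕ) :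
    (r ^ k)⁻¹ / (16 * Real.pi) * ((2 * r) ^ k) ^ (1 / q) ≤
      (∫ x in Ioo (-1 : ℝ) 1,
        cantorMaximal m r (knappSymbol m ((r ^ k)⁻¹ / 4) ((r ^ k)⁻¹ / 2)) x ^ q) ^ (1 / q) := by
  set L := (r ^ k)⁻¹
  have hL : 1 ≤ L := one_le_inv₀ (by positivity) |>.2 (pow_le_one₀ hr0.le (by linarith))
  have hA : MeasurableSet (-preCantor r k) := (isCompact_preCantor r k).measurableSet.neg
  have hAs : -preCantor r k ⊆ Icc (-1) 1 := fun x hx => by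
    have := preCantor_subset_Icc hr0.le (by linarith) k hx
    simp only [mem_Icc] at this ⊢
    constructor <;> linarith
  have hvol : volume (-preCantor r k) = ENNReal.ofReal ((2 * r) ^ k) := by
    rw [Measure.measure_neg, volume_preCantor hr0 hr]
  have hcF : ∀ x ∈ -preCantor r k, L / (16 * Real.pi) ≤
      cantorMaximal m r (knappSymbol m (L / 4) (L / 2)) x := fun x hx => by
    obtain ⟨θ, hθ, hxθ⟩ := exists_mem_rCantorSet_abs_sub_le hr0.le (by linarith) hx
    refine le_cantorMaximal_knappSymbol hm hL hθ ?_
    rwa [inv_inv, ← abs_neg, neg_add']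
  have h := mul_measureReal_rpow_le_setIntegral_rpow (by positivity) hq
    (fun x => cantorMaximal_nonneg x) hA hAs (by rw [hvol]; exact ENNReal.ofReal_ne_top) hcF
    (integrableOn_cantorMaximal_rpow (integrable_knappSymbol _ _ _) hq.le
      measure_Icc_lt_top.ne)
  rwa [measureReal_def, hvol, ENNReal.toReal_ofReal (by positivity),
    integral_Icc_eq_integral_Ioo] at h

lemma HsNorm_knappSymbol_le (m s : ℝ) {L : ℝ} (hL : 1 ≤ L) :
    HsNorm s (knappSymbol m (L / 4) (L / 2)) ≤ 4 ^ |s| * L ^ (s + 1 / 2) := by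
  have hbound : ∀ ξ ∈ Icc (L / 4) (L / 2), ‖(1 + ξ ^ 2) ^ s‖ ≤ 16 ^ |s| * (L ^ 2) ^ s := by
    intro ξ ⟨hξ0, hξL⟩
    rw [Real.norm_of_nonneg (by positivity)]
    refine rpow_le_rpow_abs_mul_rpow (by positivity) (by norm_num) ⟨?_, ?_⟩ <;> nlinarith
  have hint : ∫ ξ, (1 + ξ ^ 2) ^ s * ‖knappSymbol m (L / 4) (L / 2) ξ‖ ^ 2 ≤
      16 ^ |s| * (L ^ 2) ^ s * (L / 4) := by
    have h : (fun ξ => (1 + ξ ^ 2) ^ s * ‖knappSymbol m (L / 4) (L / 2) ξ‖ ^ 2) =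
        (Icc (L / 4) (L / 2)).indicator fun ξ => (1 + ξ ^ 2) ^ s := by
      ext ξ
      by_cases hξ : ξ ∈ Icc (L / 4) (L / 2) <;> simp [norm_knappSymbol, hξ]
    rw [h, integral_indicator measurableSet_Icc]
    refine (le_abs_self _).trans ?_
    have := norm_setIntegral_le_of_norm_le_const (measure_Icc_lt_top (μ := volume)) hbound
    rwa [Real.volume_real_Icc_of_le (by linarith), show L / 2 - L / 4 = L / 4 by ring] at this
  have hsq : (4 ^ |s| * L ^ (s + 1 / 2)) ^ 2 = 16 ^ |s| * (L ^ 2) ^ s * L := by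
    rw [mul_pow, Real.rpow_pow_comm (by norm_num), Real.rpow_pow_comm (by positivity),
      Real.rpow_add (by positivity), ← Real.sqrt_eq_rpow, Real.sqrt_sq (by positivity)]
    norm_num [mul_assoc]
  have hpi : (2 * Real.pi)⁻¹ ≤ 1 := inv_le_one_of_one_le₀ (by linarith [Real.pi_gt_three])
  rw [HsNorm, ← Real.sqrt_eq_rpow, Real.sqrt_le_iff, hsq]
  refine ⟨by positivity, ?_⟩
  calc _ ≤ (2 * Real.pi)⁻¹ * (16 ^ |s| * (L ^ 2) ^ s * (L / 4)) := by gcongr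
    _ ≤ 1 * (16 ^ |s| * (L ^ 2) ^ s * L) := by gcongr; linarith
    _ = _ := one_mul _

lemma two_mul_pow_eq_inv_pow_rpow {r : ℝ} (hr0 : 0 < r) (hr1 : r < 1) (k : ℕ) :
    (2 * r) ^ k = ((r ^ k)⁻¹) ^ (Real.log 2 / Real.log (1 / r) - 1) := by
  have hdim : (1 / r) ^ (Real.log 2 / Real.log (1 / r)) = 2 :=
    Real.rpow_logb (by positivity) (by rw [one_div]; exact (one_lt_inv₀ hr0 |>.2 hr1).ne')
      two_pos
  rw [Real.rpow_sub_one (by positivity), ← inv_pow, ← one_div,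
    ← Real.rpow_pow_comm (by positivity), hdim, eq_div_iff (by positivity), ← mul_pow,
    mul_assoc, mul_one_div_cancel hr0.ne', mul_one]

theorem cantor_lines_maximal_fails (m q r s : ℝ) (hm : 1 < m) (hq : 1 ≤ q)
    (hr : 0 < r) (hr2 : r < 1/2)
    (hs : s < 1/2 - 1/q + (Real.log 2 / Real.log (1/r)) / q) :
    ¬ ∃ C : ℝ, 0 < C ∧ ∀ fhat : ℝ → ℂ, Integrable fhat →
      (∫ x in Set.Ioo (-1:ℝ) 1,
          (⨆ (t : Set.Ioo (0:ℝ) 1) (θ : rCantorSet r),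
            ‖S1 m fhat (x + (t:ℝ) * (θ:ℝ)) t‖) ^ q) ^ (1/q) ≤ C * HsNorm s fhat := by
  rintro ⟨C, hC, hbound⟩
  set β := Real.log 2 / Real.log (1 / r)
  have hexp : s + 1 / 2 < 1 + (β - 1) / q := by
    linarith [show 1 / 2 - 1 / q + β / q + 1 / 2 = 1 + (β - 1) / q by ring]
  have hL : Tendsto (fun k : ℕ => (r ^ k)⁻¹) atTop atTop := by
    simpa only [inv_pow] using
      tendsto_pow_atTop_atTop_of_one_lt (one_lt_inv₀ hr |>.2 (by linarith))
  obtain ⟨k, hk⟩ := (hL.eventually (eventually_mul_rpow_lt_mul_rpow hexp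
    (by positivity : 0 < 1 / (16 * Real.pi)) (C * 4 ^ |s|))).exists
  refine hk.not_ge ?_
  have hL1 : 1 ≤ (r ^ k)⁻¹ := one_le_inv₀ (by positivity) |>.2 (pow_le_one₀ hr.le (by linarith))
  calc 1 / (16 * Real.pi) * ((r ^ k)⁻¹) ^ (1 + (β - 1) / q)
      = (r ^ k)⁻¹ / (16 * Real.pi) * ((2 * r) ^ k) ^ (1 / q) := by
        rw [two_mul_pow_eq_inv_pow_rpow hr (by linarith), ← Real.rpow_mul (by positivity),
          show (β - 1) * (1 / q) = (β - 1) / q by ring,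
          Real.rpow_add (by positivity), Real.rpow_one]
        ring
    _ ≤ _ := knapp_maximal_lower_bound hm.le (by linarith) hr hr2 k
    _ ≤ C * HsNorm s (knappSymbol m ((r ^ k)⁻¹ / 4) ((r ^ k)⁻¹ / 2)) :=
        hbound _ (integrable_knappSymbol _ _ _)
    _ ≤ C * (4 ^ |s| * ((r ^ k)⁻¹) ^ (s + 1 / 2)) := by
        gcongr; exact HsNorm_knappSymbol_le m s hL1
    _ = C * 4 ^ |s| * ((r ^ k)⁻¹) ^ (s + 1 / 2) := by ring
end

section
/- Let λ ≥ 1, q ≥ 2, 0 < α ≤ 1, and s* = min(1/4, α/q). Let μ be an α-dimensional measure on ℝ and Ω an interval of length λ^{−qs*/α}. Suppose w = (x,t,θ) and w' = (x',t',θ') satisfy t,t' ∈ (−1,1), θ,θ' ∈ Ω, and 2λ^{−qs*/α} < |x−x'| with |x−x'| ≤ 4|t−t'|. Then, for m > 1 and for the kernel K_λ(w,w') = λ ∫ e^{iφ(λξ,w,w')} ψ(ξ)² dξ with φ(ξ,w,w') = ((x+tθ) − (x'+t'θ'))ξ + (t−t')|ξ|^m and ψ ∈ C_0^∞((−2,−1/2)∪(1/2,2)),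 one has |K_λ(w,w')| ≤ C λ (λ|x−x'|)^{−1/2}. -/
open MeasureTheory Set

open intervalIntegral

noncomputable section

lemma norm_exp_I_mul_real (r : ℝ) : ‖Complex.exp (Complex.I * (r:ℂ))‖ = 1 := by
  rw [mul_comm, Complex.norm_exp_ofReal_mul_I]

lemma vdc1 (Φ Φ' Φ'' : ℝ → ℝ) (u v : ℝ) (huv : u ≤ v) (ε : ℝ) (hε : 0 < ε)
    (hd1 : ∀ ξ ∈ Icc u v, HasDerivAt Φ (Φ' ξ) ξ)
    (hd2 : ∀ ξ ∈ Icc u v, HasDerivAt Φ' (Φ'' ξ) ξ)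
    (hc2 : ContinuousOn Φ'' (Icc u v))
    (hpos : ∀ ξ ∈ Icc u v, 0 ≤ Φ'' ξ)
    (hlow : ∀ ξ ∈ Icc u v, ε ≤ |Φ' ξ|) :
    ‖∫ ξ in u..v, Complex.exp (Complex.I * (Φ ξ : ℂ))‖ ≤ 4 / ε := by
  have huIcc : uIcc u v = Icc u v := uIcc_of_le huv
  have hne : ∀ ξ ∈ Icc u v, Φ' ξ ≠ 0 := by
    intro ξ hξ h0
    have := hlow ξ hξ; rw [h0, abs_zero] at this; linarith
  have hc1 : ContinuousOn Φ' (Icc u v) := fun ξ hξ => (hd2 ξ hξ).continuousAt.continuousWithinAt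
  have hc0 : ContinuousOn Φ (Icc u v) := fun ξ hξ => (hd1 ξ hξ).continuousAt.continuousWithinAt
  set f : ℝ → ℂ := fun ξ => Complex.exp (Complex.I * (Φ ξ : ℂ)) with hf
  set h : ℝ → ℂ := fun ξ => -Complex.I * (Complex.exp (Complex.I * (Φ ξ : ℂ)) / (Φ' ξ : ℂ))
    with hh
  set c : ℝ → ℂ := fun ξ => Complex.I * ((Φ'' ξ / (Φ' ξ)^2 : ℝ) : ℂ) * f ξ with hcdef
  -- derivative of h
  have hdh : ∀ ξ ∈ Icc u v, HasDerivAt h (f ξ + c ξ) ξ := by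
    intro ξ hξ
    have hP : ((Φ' ξ : ℂ)) ≠ 0 := Complex.ofReal_ne_zero.2 (hne ξ hξ)
    have d1 : HasDerivAt (fun s => Complex.exp (Complex.I * (Φ s : ℂ)))
        (Complex.I * (Φ' ξ : ℂ) * Complex.exp (Complex.I * (Φ ξ : ℂ))) ξ := by
      have hr : HasDerivAt (fun s => (Φ s : ℂ)) ((Φ' ξ : ℂ)) ξ := (hd1 ξ hξ).ofReal_comp
      have : HasDerivAt (fun s => Complex.I * (Φ s : ℂ)) (Complex.I * (Φ' ξ : ℂ)) ξ :=
        hr.const_mul Complex.I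
      simpa [mul_comm] using this.cexp
    have d2 : HasDerivAt (fun s => ((Φ' s : ℂ))) ((Φ'' ξ : ℂ)) ξ := (hd2 ξ hξ).ofReal_comp
    have := (d1.div d2 hP).const_mul (-Complex.I)
    refine this.congr_deriv ?_
    simp only [hf, hcdef]
    push_cast
    field_simp
    ring_nf
    simp only [pow_succ, pow_zero, one_mul, Complex.I_sq]
    ring
  have hccont : ContinuousOn c (Icc u v) := by
    apply ContinuousOn.mul
    · apply ContinuousOn.mul continuousOn_const
      apply Complex.continuous_ofReal.comp_continuousOn
      exact hc2.div (hc1.pow 2) (fun ξ hξ => pow_ne_zero 2 (hne ξ hξ))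
    · exact Complex.continuous_exp.comp_continuousOn
        ((Complex.continuous_ofReal.comp_continuousOn hc0).const_smul Complex.I)
  have hfcont : ContinuousOn f (Icc u v) :=
    Complex.continuous_exp.comp_continuousOn
      ((Complex.continuous_ofReal.comp_continuousOn hc0).const_smul Complex.I)
  have hderivcont : ContinuousOn (fun ξ => f ξ + c ξ) (Icc u v) := hfcont.add hccont
  -- FTC for h
  have hint : IntervalIntegrable (fun ξ => f ξ + c ξ) volume u v := by
    rw [intervalIntegrable_iff_integrableOn_Icc_of_le huv]
    exact hderivcont.integrableOn_compact isCompact_Icc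
  have ftc : ∫ ξ in u..v, (f ξ + c ξ) = h v - h u := by
    apply integral_eq_sub_of_hasDerivAt
    · intro ξ hξ; rw [huIcc] at hξ; exact hdh ξ hξ
    · exact hint
  have hcint : IntervalIntegrable c volume u v := by
    rw [intervalIntegrable_iff_integrableOn_Icc_of_le huv]
    exact hccont.integrableOn_compact isCompact_Icc
  have split : (∫ ξ in u..v, f ξ) = (h v - h u) - ∫ ξ in u..v, c ξ := by
    rw [← ftc, ← intervalIntegral.integral_sub hint hcint]
    apply intervalIntegral.integral_congr
    intro ξ _
    ring
  -- bound on h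
  have hb : ∀ ξ ∈ Icc u v, ‖h ξ‖ ≤ 1 / ε := by
    intro ξ hξ
    rw [hh]
    simp only [norm_mul, norm_neg, norm_div, Complex.norm_I, one_mul,
      Complex.norm_real, Real.norm_eq_abs]
    rw [norm_exp_I_mul_real]
    rw [div_le_div_iff₀ (lt_of_lt_of_le hε (hlow ξ hξ)) hε]
    simpa using hlow ξ hξ
  -- bound on ∫ c via FTC for -1/Φ'
  have hG : ∀ ξ ∈ Icc u v, HasDerivAt (fun s => -(Φ' s)⁻¹) (Φ'' ξ / (Φ' ξ)^2) ξ := by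
    intro ξ hξ
    have := ((hd2 ξ hξ).inv (hne ξ hξ)).neg
    refine this.congr_deriv ?_
    ring
  have hratio_cont : ContinuousOn (fun ξ => Φ'' ξ / (Φ' ξ)^2) (Icc u v) :=
    hc2.div (hc1.pow 2) (fun ξ hξ => pow_ne_zero 2 (hne ξ hξ))
  have hratio_int : IntervalIntegrable (fun ξ => Φ'' ξ / (Φ' ξ)^2) volume u v := by
    rw [intervalIntegrable_iff_integrableOn_Icc_of_le huv]
    exact hratio_cont.integrableOn_compact isCompact_Icc
  have ftc2 : (∫ ξ in u..v, Φ'' ξ / (Φ' ξ)^2) = -(Φ' v)⁻¹ - -(Φ' u)⁻¹ := by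
    apply integral_eq_sub_of_hasDerivAt
    · intro ξ hξ; rw [huIcc] at hξ; exact hG ξ hξ
    · exact hratio_int
  have hinvb : ∀ ξ ∈ Icc u v, |(Φ' ξ)⁻¹| ≤ 1/ε := by
    intro ξ hξ
    rw [abs_inv, one_div]
    exact inv_anti₀ hε (hlow ξ hξ)
  have hcbound : ‖∫ ξ in u..v, c ξ‖ ≤ 2 / ε := by
    have h1 : ‖∫ ξ in u..v, c ξ‖ ≤ |∫ ξ in u..v, Φ'' ξ / (Φ' ξ)^2| := by
      apply intervalIntegral.norm_integral_le_abs_of_norm_le _ hratio_int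
      apply MeasureTheory.ae_restrict_of_forall_mem measurableSet_uIoc
      intro ξ hξ
      have hξ' : ξ ∈ Icc u v := by
        rw [Set.uIoc_of_le huv] at hξ; exact Ioc_subset_Icc_self hξ
      have : ‖c ξ‖ = |Φ'' ξ / (Φ' ξ)^2| := by
        rw [hcdef]
        simp only [norm_mul, Complex.norm_I, one_mul, Complex.norm_real, Real.norm_eq_abs]
        rw [norm_exp_I_mul_real, mul_one]
      rw [this, abs_of_nonneg (div_nonneg (hpos ξ hξ') (sq_nonneg _))]
    rw [ftc2] at h1
    refine h1.trans ?_
    have h2 := hinvb u (left_mem_Icc.2 huv)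
    have h3 := hinvb v (right_mem_Icc.2 huv)
    calc |-(Φ' v)⁻¹ - -(Φ' u)⁻¹| ≤ |(Φ' v)⁻¹| + |(Φ' u)⁻¹| := by
          refine (abs_sub _ _).trans ?_
          simp [abs_neg]
      _ ≤ 1/ε + 1/ε := add_le_add h3 h2
      _ = 2/ε := by ring
  -- final assembly
  rw [show (fun ξ => Complex.exp (Complex.I * (Φ ξ : ℂ))) = f from rfl] at *
  rw [split]
  have hu : ‖h v - h u‖ ≤ 1/ε + 1/ε :=
    (norm_sub_le _ _).trans (add_le_add (hb v (right_mem_Icc.2 huv)) (hb u (left_mem_Icc.2 huv)))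
  calc ‖h v - h u - ∫ ξ in u..v, c ξ‖ ≤ ‖h v - h u‖ + ‖∫ ξ in u..v, c ξ‖ := norm_sub_le _ _
    _ ≤ (1/ε + 1/ε) + 2/ε := add_le_add hu hcbound
    _ = 4/ε := by ring

lemma vdc2 (Φ Φ' Φ'' : ℝ → ℝ) (a b : ℝ) (D : ℝ) (hD : 0 < D)
    (hd1 : ∀ ξ ∈ Icc a b, HasDerivAt Φ (Φ' ξ) ξ)
    (hd2 : ∀ ξ ∈ Icc a b, HasDerivAt Φ' (Φ'' ξ) ξ)
    (hc2 : ContinuousOn Φ'' (Icc a b))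
    (hDD : ∀ ξ ∈ Icc a b, D ≤ Φ'' ξ) :
    ∀ u ∈ Icc a b, ∀ v ∈ Icc a b, u ≤ v →
      ‖∫ ξ in u..v, Complex.exp (Complex.I * (Φ ξ : ℂ))‖ ≤ 10 / Real.sqrt D := by
  intro u hu v hv huv
  set ε := Real.sqrt D with hεdef
  have hε : 0 < ε := Real.sqrt_pos.2 hD
  have hεsq : ε * ε = D := Real.mul_self_sqrt hD.le
  have hc1 : ContinuousOn Φ' (Icc a b) := fun ξ hξ => (hd2 ξ hξ).continuousAt.continuousWithinAt
  have hc0 : ContinuousOn Φ (Icc a b) := fun ξ hξ => (hd1 ξ hξ).continuousAt.continuousWithinAt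
  have hfcont : ContinuousOn (fun ξ => Complex.exp (Complex.I * (Φ ξ : ℂ))) (Icc a b) :=
    Complex.continuous_exp.comp_continuousOn
      ((Complex.continuous_ofReal.comp_continuousOn hc0).const_smul Complex.I)
  -- growth of Φ'
  have growth : ∀ s ∈ Icc a b, ∀ w ∈ Icc a b, s ≤ w → D * (w - s) ≤ Φ' w - Φ' s := by
    intro s hs w hw hsw
    exact (convex_Icc a b).mul_sub_le_image_sub_of_le_deriv hc1
      (fun ξ hξ => ((hd2 ξ (interior_subset hξ)).differentiableAt).differentiableWithinAt)
      (fun ξ hξ => by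
        rw [(hd2 ξ (interior_subset hξ)).deriv]; exact hDD ξ (interior_subset hξ))
      s hs w hw hsw
  -- find the critical point c
  obtain ⟨c, hcu, hcv, hP1, hP2⟩ :
      ∃ c, u ≤ c ∧ c ≤ v ∧ (Φ' c ≤ 0 ∨ c = u) ∧ (0 ≤ Φ' c ∨ c = v) := by
    rcases le_or_gt 0 (Φ' u) with h1 | h1
    · exact ⟨u, le_refl u, huv, Or.inr rfl, Or.inl h1⟩
    rcases le_or_gt (Φ' v) 0 with h2 | h2
    · exact ⟨v, huv, le_refl v, Or.inl h2, Or.inr rfl⟩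
    have hIcc : Icc u v ⊆ Icc a b := Icc_subset_Icc hu.1 hv.2
    have : (0:ℝ) ∈ Icc (Φ' u) (Φ' v) := ⟨h1.le, h2.le⟩
    obtain ⟨c, hc, hc0'⟩ := intermediate_value_Icc huv (hc1.mono hIcc) this
    exact ⟨c, hc.1, hc.2, Or.inl hc0'.le, Or.inl hc0'.ge⟩
  have hcab : c ∈ Icc a b := ⟨hu.1.trans hcu, hcv.trans hv.2⟩
  set p := max u (c - 1/ε) with hpdef
  set q := min v (c + 1/ε) with hqdef
  have hup : u ≤ p := le_max_left _ _
  have hpc : p ≤ c := max_le hcu (by linarith [one_div_pos.2 hε])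
  have hcq : c ≤ q := le_min hcv (by linarith [one_div_pos.2 hε])
  have hqv : q ≤ v := min_le_left _ _
  have hpab : p ∈ Icc a b := ⟨hu.1.trans hup, (hpc.trans hcv).trans hv.2⟩
  have hqab : q ∈ Icc a b := ⟨hu.1.trans (hup.trans (hpc.trans hcq)), hqv.trans hv.2⟩
  -- integrability on subintervals
  have hintgr : ∀ s ∈ Icc a b, ∀ w ∈ Icc a b,
      IntervalIntegrable (fun ξ => Complex.exp (Complex.I * (Φ ξ : ℂ))) volume s w := by
    intro s hs w hw
    apply ContinuousOn.intervalIntegrable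
    exact hfcont.mono (Set.uIcc_subset_Icc hs hw)
  set f : ℝ → ℂ := fun ξ => Complex.exp (Complex.I * (Φ ξ : ℂ)) with hfdef
  have hDdivε : D * (1/ε) = ε := by
    field_simp
    linarith [hεsq]
  -- middle bound
  have hmid : ‖∫ ξ in p..q, f ξ‖ ≤ 2/ε := by
    have hb : ∀ ξ ∈ Set.uIoc p q, ‖f ξ‖ ≤ 1 := by
      intro ξ _
      show ‖Complex.exp (Complex.I * (Φ ξ:ℂ))‖ ≤ 1
      rw [mul_comm, Complex.norm_exp_ofReal_mul_I]
    have := intervalIntegral.norm_integral_le_of_norm_le_const hb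
    refine this.trans ?_
    rw [one_mul, abs_of_nonneg (by linarith [hpc.trans hcq] : (0:ℝ) ≤ q - p)]
    have h1 : q ≤ c + 1/ε := min_le_right _ _
    have h2 : c - 1/ε ≤ p := le_max_right _ _
    have h3 : 2/ε = 1/ε + 1/ε := by ring
    linarith
  -- left bound
  have hleft : ‖∫ ξ in u..p, f ξ‖ ≤ 4/ε := by
    rcases eq_or_lt_of_le hup with heq | hlt
    · rw [← heq, intervalIntegral.integral_same, norm_zero]
      positivity
    · have hx : u < c - 1/ε := by
        by_contra hcon
        push_neg at hcon
        rw [hpdef, max_eq_left hcon] at hlt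
        exact lt_irrefl u hlt
      have hpeq : p = c - 1/ε := max_eq_right hx.le
      have hcne : c ≠ u := fun h => by rw [h] at hx; linarith [one_div_pos.2 hε]
      have hΦc : Φ' c ≤ 0 := hP1.resolve_right hcne
      have hsub : Icc u p ⊆ Icc a b := Icc_subset_Icc hu.1 hpab.2
      apply vdc1 Φ Φ' Φ'' u p hup ε hε
        (fun ξ hξ => hd1 ξ (hsub hξ)) (fun ξ hξ => hd2 ξ (hsub hξ)) (hc2.mono hsub)
        (fun ξ hξ => le_trans hD.le (hDD ξ (hsub hξ)))
      intro ξ hξ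
      have hξab : ξ ∈ Icc a b := hsub hξ
      have g1 : D * (p - ξ) ≤ Φ' p - Φ' ξ := growth ξ hξab p hpab hξ.2
      have g2 : D * (c - p) ≤ Φ' c - Φ' p := growth p hpab c hcab hpc
      have hcp : c - p = 1/ε := by rw [hpeq]; ring
      have : Φ' ξ ≤ -ε := by nlinarith [mul_nonneg hD.le (sub_nonneg.2 hξ.2), hDdivε, hcp]
      calc ε ≤ -(Φ' ξ) := by linarith
        _ ≤ |Φ' ξ| := neg_le_abs _
  -- right bound
  have hright : ‖∫ ξ in q..v, f ξ‖ ≤ 4/ε := by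
    rcases eq_or_lt_of_le hqv with heq | hlt
    · rw [heq, intervalIntegral.integral_same, norm_zero]
      positivity
    · have hx : c + 1/ε < v := by
        by_contra hcon
        push_neg at hcon
        rw [hqdef, min_eq_left hcon] at hlt
        exact lt_irrefl v hlt
      have hqeq : q = c + 1/ε := min_eq_right hx.le
      have hcne : c ≠ v := fun h => by rw [h] at hx; linarith [one_div_pos.2 hε]
      have hΦc : 0 ≤ Φ' c := hP2.resolve_right hcne
      have hsub : Icc q v ⊆ Icc a b := Icc_subset_Icc hqab.1 hv.2
      apply vdc1 Φ Φ' Φ'' q v hqv ε hε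
        (fun ξ hξ => hd1 ξ (hsub hξ)) (fun ξ hξ => hd2 ξ (hsub hξ)) (hc2.mono hsub)
        (fun ξ hξ => le_trans hD.le (hDD ξ (hsub hξ)))
      intro ξ hξ
      have hξab : ξ ∈ Icc a b := hsub hξ
      have g1 : D * (ξ - q) ≤ Φ' ξ - Φ' q := growth q hqab ξ hξab hξ.1
      have g2 : D * (q - c) ≤ Φ' q - Φ' c := growth c hcab q hqab hcq
      have hcq' : q - c = 1/ε := by rw [hqeq]; ring
      have : ε ≤ Φ' ξ := by nlinarith [mul_nonneg hD.le (sub_nonneg.2 hξ.1), hDdivε, hcq']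
      exact this.trans (le_abs_self _)
  -- combine
  have i1 := hintgr u hu p hpab
  have i2 := hintgr p hpab q hqab
  have i3 := hintgr q hqab v hv
  have e1 : (∫ ξ in u..p, f ξ) + (∫ ξ in p..q, f ξ) = ∫ ξ in u..q, f ξ :=
    intervalIntegral.integral_add_adjacent_intervals i1 i2
  have e2 : (∫ ξ in u..q, f ξ) + (∫ ξ in q..v, f ξ) = ∫ ξ in u..v, f ξ :=
    intervalIntegral.integral_add_adjacent_intervals (i1.trans i2) i3
  calc ‖∫ ξ in u..v, f ξ‖ = ‖((∫ ξ in u..p, f ξ) + (∫ ξ in p..q, f ξ)) + ∫ ξ in q..v, f ξ‖ := by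
        rw [e1, e2]
    _ ≤ ‖(∫ ξ in u..p, f ξ) + (∫ ξ in p..q, f ξ)‖ + ‖∫ ξ in q..v, f ξ‖ := norm_add_le _ _
    _ ≤ (‖∫ ξ in u..p, f ξ‖ + ‖∫ ξ in p..q, f ξ‖) + ‖∫ ξ in q..v, f ξ‖ := by
        exact add_le_add_left (norm_add_le _ _) _
    _ ≤ (4/ε + 2/ε) + 4/ε := by
        exact add_le_add (add_le_add hleft hmid) hright
    _ = 10/ε := by ring

lemma vdc_amp (Φ Φ' Φ'' G G' : ℝ → ℝ) (a b : ℝ) (hab : a ≤ b) (D : ℝ) (hD : 0 < D)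
    (hΦc : Continuous Φ)
    (hd1 : ∀ ξ ∈ Icc a b, HasDerivAt Φ (Φ' ξ) ξ)
    (hd2 : ∀ ξ ∈ Icc a b, HasDerivAt Φ' (Φ'' ξ) ξ)
    (hc2 : ContinuousOn Φ'' (Icc a b))
    (hDD : ∀ ξ ∈ Icc a b, D ≤ Φ'' ξ)
    (hdG : ∀ ξ ∈ Icc a b, HasDerivAt G (G' ξ) ξ)
    (hcG' : ContinuousOn G' (Icc a b))
    (Mg Mg' : ℝ)
    (hMg : ∀ ξ ∈ Icc a b, |G ξ| ≤ Mg) (hMg' : ∀ ξ ∈ Icc a b, |G' ξ| ≤ Mg') :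
    ‖∫ ξ in a..b, Complex.exp (Complex.I * (Φ ξ : ℂ)) * (G ξ : ℂ)‖ ≤
      10 / Real.sqrt D * (Mg + (b - a) * Mg') := by
  set f : ℝ → ℂ := fun ξ => Complex.exp (Complex.I * (Φ ξ : ℂ)) with hfdef
  have hfc : Continuous f :=
    Complex.continuous_exp.comp ((Complex.continuous_ofReal.comp hΦc).const_smul Complex.I)
  set F : ℝ → ℂ := fun ξ => ∫ s in a..ξ, f s with hFdef
  have hFd : ∀ ξ ∈ Icc a b, HasDerivAt F (f ξ) ξ := by
    intro ξ _
    exact intervalIntegral.integral_hasDerivAt_right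
      (hfc.intervalIntegrable a ξ)
      (hfc.stronglyMeasurableAtFilter _ _)
      hfc.continuousAt
  have hFbound : ∀ ξ ∈ Icc a b, ‖F ξ‖ ≤ 10 / Real.sqrt D := by
    intro ξ hξ
    exact vdc2 Φ Φ' Φ'' a b D hD hd1 hd2 hc2 hDD a (left_mem_Icc.2 hab) ξ hξ hξ.1
  have huIcc : uIcc a b = Icc a b := uIcc_of_le hab
  -- integration by parts
  have hGc : ∀ ξ ∈ Icc a b, HasDerivAt (fun s => ((G s : ℝ) : ℂ)) ((G' ξ : ℂ)) ξ :=
    fun ξ hξ => (hdG ξ hξ).ofReal_comp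
  have hG'int : IntervalIntegrable (fun ξ => ((G' ξ : ℝ) : ℂ)) volume a b := by
    rw [intervalIntegrable_iff_integrableOn_Icc_of_le hab]
    exact (Complex.continuous_ofReal.comp_continuousOn hcG').integrableOn_compact isCompact_Icc
  have hfint : IntervalIntegrable f volume a b := hfc.intervalIntegrable a b
  have ibp := intervalIntegral.integral_mul_deriv_eq_deriv_mul
    (u := F) (u' := f) (v := fun s => ((G s : ℝ) : ℂ)) (v' := fun s => ((G' s : ℝ) : ℂ))
    (fun ξ hξ => hFd ξ (huIcc ▸ hξ)) (fun ξ hξ => hGc ξ (huIcc ▸ hξ)) hfint hG'int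
  -- ibp : ∫ F * G' = F b * G b - F a * G a - ∫ f * G
  have hFa : F a = 0 := intervalIntegral.integral_same
  have key : (∫ ξ in a..b, f ξ * (G ξ : ℂ)) = F b * (G b : ℂ) - ∫ ξ in a..b, F ξ * (G' ξ : ℂ) := by
    rw [ibp, hFa]
    ring
  rw [show (∫ ξ in a..b, Complex.exp (Complex.I * (Φ ξ : ℂ)) * (G ξ : ℂ))
      = ∫ ξ in a..b, f ξ * (G ξ : ℂ) from rfl, key]
  have hbab : b ∈ Icc a b := right_mem_Icc.2 hab
  have t1 : ‖F b * (G b : ℂ)‖ ≤ 10 / Real.sqrt D * Mg := by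
    rw [norm_mul, Complex.norm_real]
    exact mul_le_mul (hFbound b hbab) (hMg b hbab) (abs_nonneg _)
      (by positivity)
  have t2 : ‖∫ ξ in a..b, F ξ * (G' ξ : ℂ)‖ ≤ 10 / Real.sqrt D * Mg' * (b - a) := by
    have hb : ∀ ξ ∈ Set.uIoc a b, ‖F ξ * (G' ξ : ℂ)‖ ≤ 10 / Real.sqrt D * Mg' := by
      intro ξ hξ
      have hξ' : ξ ∈ Icc a b := by
        rw [Set.uIoc_of_le hab] at hξ; exact Ioc_subset_Icc_self hξ
      rw [norm_mul, Complex.norm_real]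
      exact mul_le_mul (hFbound ξ hξ') (hMg' ξ hξ') (abs_nonneg _) (by positivity)
    have := intervalIntegral.norm_integral_le_of_norm_le_const hb
    refine this.trans ?_
    rw [abs_of_nonneg (by linarith : (0:ℝ) ≤ b - a)]
  have hMg'0 : 0 ≤ Mg' := le_trans (abs_nonneg _) (hMg' a (left_mem_Icc.2 hab))
  calc ‖F b * (G b : ℂ) - ∫ ξ in a..b, F ξ * (G' ξ : ℂ)‖
      ≤ ‖F b * (G b : ℂ)‖ + ‖∫ ξ in a..b, F ξ * (G' ξ : ℂ)‖ := norm_sub_le _ _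
    _ ≤ 10 / Real.sqrt D * Mg + 10 / Real.sqrt D * Mg' * (b - a) := add_le_add t1 t2
    _ = 10 / Real.sqrt D * (Mg + (b - a) * Mg') := by ring

lemma intervalIntegral_conj (f : ℝ → ℂ) (a b : ℝ) :
    ∫ x in a..b, (starRingEnd ℂ) (f x) = (starRingEnd ℂ) (∫ x in a..b, f x) := by
  rw [intervalIntegral, intervalIntegral, integral_conj, integral_conj, ← map_sub]

lemma vdc_amp_neg (Φ Φ' Φ'' G G' : ℝ → ℝ) (a b : ℝ) (hab : a ≤ b) (D : ℝ) (hD : 0 < D)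
    (hΦc : Continuous Φ)
    (hd1 : ∀ ξ ∈ Icc a b, HasDerivAt Φ (Φ' ξ) ξ)
    (hd2 : ∀ ξ ∈ Icc a b, HasDerivAt Φ' (Φ'' ξ) ξ)
    (hc2 : ContinuousOn Φ'' (Icc a b))
    (hDD : ∀ ξ ∈ Icc a b, Φ'' ξ ≤ -D)
    (hdG : ∀ ξ ∈ Icc a b, HasDerivAt G (G' ξ) ξ)
    (hcG' : ContinuousOn G' (Icc a b))
    (Mg Mg' : ℝ)
    (hMg : ∀ ξ ∈ Icc a b, |G ξ| ≤ Mg) (hMg' : ∀ ξ ∈ Icc a b, |G' ξ| ≤ Mg') :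
    ‖∫ ξ in a..b, Complex.exp (Complex.I * (Φ ξ : ℂ)) * (G ξ : ℂ)‖ ≤
      10 / Real.sqrt D * (Mg + (b - a) * Mg') := by
  have key := vdc_amp (fun ξ => -Φ ξ) (fun ξ => -Φ' ξ) (fun ξ => -Φ'' ξ) G G' a b hab D hD
    hΦc.neg (fun ξ hξ => (hd1 ξ hξ).neg) (fun ξ hξ => (hd2 ξ hξ).neg) hc2.neg
    (fun ξ hξ => le_neg.mp (hDD ξ hξ)) hdG hcG' Mg Mg' hMg hMg'
  have hconj : (∫ ξ in a..b, Complex.exp (Complex.I * ((-Φ ξ : ℝ) : ℂ)) * (G ξ : ℂ))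
      = (starRingEnd ℂ) (∫ ξ in a..b, Complex.exp (Complex.I * ((Φ ξ : ℝ) : ℂ)) * (G ξ : ℂ)) := by
    rw [← intervalIntegral_conj]
    apply intervalIntegral.integral_congr
    intro ξ _
    show Complex.exp (Complex.I * ((-Φ ξ : ℝ):ℂ)) * ((G ξ:ℝ):ℂ)
        = (starRingEnd ℂ) (Complex.exp (Complex.I * ((Φ ξ:ℝ):ℂ)) * ((G ξ:ℝ):ℂ))
    rw [map_mul, ← Complex.exp_conj, map_mul, Complex.conj_I, Complex.conj_ofReal,
      Complex.conj_ofReal]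
    push_cast
    ring_nf
  rw [hconj] at key
  rwa [RCLike.norm_conj] at key

lemma rpow_factor_bound (m lam : ℝ) (hm : 1 < m) (hlam : 1 ≤ lam) (ξ : ℝ)
    (hξ : ξ ∈ Icc (1/2:ℝ) 2) :
    lam / (2:ℝ)^(m+1) ≤ (lam*ξ)^(m-2) * (lam*lam) := by
  have hlampos : (0:ℝ) < lam := lt_of_lt_of_le one_pos hlam
  have hξpos : (0:ℝ) < ξ := lt_of_lt_of_le (by norm_num) hξ.1
  have hlx : (1:ℝ)/2 ≤ lam * ξ := by nlinarith [hξ.1]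
  have hlxpos : (0:ℝ) < lam * ξ := by positivity
  have hlx2 : lam * ξ ≤ 2 * lam := by nlinarith [hξ.2]
  have e1 : (lam*ξ)^(m-2) = (lam*ξ)^(m-1) / (lam*ξ) := by
    have h : m - 2 = (m-1) - 1 := by ring
    rw [h, Real.rpow_sub hlxpos, Real.rpow_one]
  have a1 : ((1:ℝ)/2)^m ≤ ((1:ℝ)/2)^(m-1) :=
    Real.rpow_le_rpow_of_exponent_ge (by norm_num) (by norm_num) (by linarith)
  have a2 : ((1:ℝ)/2)^(m-1) ≤ (lam*ξ)^(m-1) :=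
    Real.rpow_le_rpow (by norm_num) hlx (by linarith)
  have a3 : ((1:ℝ)/2)^m = ((2:ℝ)^m)⁻¹ := by
    rw [one_div]
    exact Real.inv_rpow (by norm_num) m
  have h2 : ((2:ℝ)^m)⁻¹ ≤ (lam*ξ)^(m-1) := by rw [← a3]; linarith
  have h3 : (0:ℝ) < (2:ℝ)^m := Real.rpow_pos_of_pos two_pos m
  have h4 : ((2:ℝ)^m)⁻¹ / (2*lam) ≤ (lam*ξ)^(m-1)/(lam*ξ) :=
    div_le_div₀ (Real.rpow_nonneg hlxpos.le _) h2 hlxpos hlx2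
  have h5 := mul_le_mul_of_nonneg_right h4 (by positivity : (0:ℝ) ≤ lam * lam)
  have h6 : lam/((2:ℝ)^(m+1)) = ((2:ℝ)^m)⁻¹/(2*lam)*(lam*lam) := by
    rw [Real.rpow_add two_pos, Real.rpow_one]
    field_simp
  rw [e1, h6]
  exact h5

lemma piece_bound (m lam A B : ℝ) (hm : 1 < m) (hlam : 1 ≤ lam) (hB : B ≠ 0)
    (G G' : ℝ → ℝ) (hdG : ∀ ξ, HasDerivAt G (G' ξ) ξ) (hcG' : Continuous G')
    (Mg Mg' : ℝ) (hMg : ∀ ξ ∈ Icc (1/2:ℝ) 2, |G ξ| ≤ Mg)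
    (hMg' : ∀ ξ ∈ Icc (1/2:ℝ) 2, |G' ξ| ≤ Mg') :
    ‖∫ ξ in (1/2:ℝ)..2,
        Complex.exp (Complex.I * ((A * (lam * ξ) + B * (lam*ξ)^m : ℝ) : ℂ)) * (G ξ : ℂ)‖
      ≤ 10 / Real.sqrt (|B| * (m*(m-1)) * (lam / (2:ℝ)^(m+1))) * (Mg + (3/2) * Mg') := by
  have hlampos : (0:ℝ) < lam := lt_of_lt_of_le one_pos hlam
  have h2pow : (0:ℝ) < (2:ℝ)^(m+1) := Real.rpow_pos_of_pos two_pos _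
  set D : ℝ := |B| * (m*(m-1)) * (lam / (2:ℝ)^(m+1)) with hDdef
  have hD : 0 < D := by
    apply mul_pos (mul_pos (abs_pos.2 hB) (by nlinarith)) (by positivity)
  set Φ : ℝ → ℝ := fun ξ => A * (lam * ξ) + B * (lam*ξ)^m with hΦdef
  set Φ' : ℝ → ℝ := fun ξ => A * lam + B * (m * (lam*ξ)^(m-1) * lam) with hΦ'def
  set Φ'' : ℝ → ℝ := fun ξ => B * (m * ((m-1) * (lam*ξ)^(m-2) * lam) * lam) with hΦ''def
  have hne : ∀ ξ ∈ Icc (1/2:ℝ) 2, lam * ξ ≠ 0 := by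
    intro ξ hξ
    have : (0:ℝ) < lam * ξ := by nlinarith [hξ.1]
    exact this.ne'
  have hlin : ∀ ξ : ℝ, HasDerivAt (fun s => lam * s) lam ξ := by
    intro ξ
    simpa using (hasDerivAt_id ξ).const_mul lam
  have hd1 : ∀ ξ ∈ Icc (1/2:ℝ) 2, HasDerivAt Φ (Φ' ξ) ξ := by
    intro ξ hξ
    have hpow : HasDerivAt (fun y : ℝ => y ^ m) (m * (lam*ξ)^(m-1)) (lam*ξ) :=
      Real.hasDerivAt_rpow_const (Or.inl (hne ξ hξ))
    have hcomp : HasDerivAt (fun s => (lam*s)^m) (m * (lam*ξ)^(m-1) * lam) ξ :=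
      hpow.comp ξ (hlin ξ)
    have h1 : HasDerivAt (fun s => A * (lam * s)) (A * lam) ξ := by
      simpa [mul_comm, mul_assoc] using (hlin ξ).const_mul A
    exact h1.add (hcomp.const_mul B)
  have hd2 : ∀ ξ ∈ Icc (1/2:ℝ) 2, HasDerivAt Φ' (Φ'' ξ) ξ := by
    intro ξ hξ
    have hpow : HasDerivAt (fun y : ℝ => y ^ (m-1)) ((m-1) * (lam*ξ)^(m-1-1)) (lam*ξ) :=
      Real.hasDerivAt_rpow_const (Or.inl (hne ξ hξ))
    have hcomp : HasDerivAt (fun s => (lam*s)^(m-1)) ((m-1) * (lam*ξ)^(m-1-1) * lam) ξ :=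
      hpow.comp ξ (hlin ξ)
    have h1 : HasDerivAt (fun s => A * lam + B * (m * (lam*s)^(m-1) * lam))
        (B * (m * ((m-1) * (lam*ξ)^(m-1-1) * lam) * lam)) ξ := by
      have := ((hcomp.const_mul m).const_mul B)
      have h2 := (this.mul_const lam).const_add (A * lam)
      rw [show (fun s => A * lam + B * (m * (lam*s)^(m-1) * lam)) =
          (fun x => A * lam + B * (m * (lam * x) ^ (m - 1)) * lam) by ext s; ring]
      exact h2.congr_deriv (by ring)
    have hexp : m - 1 - 1 = m - 2 := by ring
    rw [hexp] at h1
    exact h1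
  have hrpowc : Continuous (fun y : ℝ => y ^ m) := by
    rw [continuous_iff_continuousAt]
    exact fun y => Real.continuousAt_rpow_const y m (Or.inr (by linarith))
  have hΦc : Continuous Φ := by
    apply Continuous.add
    · exact (continuous_const.mul (continuous_const.mul continuous_id))
    · exact continuous_const.mul (hrpowc.comp (continuous_const.mul continuous_id))
  have hc2 : ContinuousOn Φ'' (Icc (1/2:ℝ) 2) := by
    apply ContinuousOn.mul continuousOn_const
    apply ContinuousOn.mul
    apply ContinuousOn.mul continuousOn_const
    · apply ContinuousOn.mul _ continuousOn_const
      apply ContinuousOn.mul continuousOn_const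
      intro ξ hξ
      exact ((Real.continuousAt_rpow_const _ _ (Or.inl (hne ξ hξ))).comp
        ((continuous_const.mul continuous_id).continuousAt)).continuousWithinAt
    · exact continuousOn_const
  -- second derivative bound
  have hΦ''bound : ∀ ξ ∈ Icc (1/2:ℝ) 2,
      D ≤ |B| * (m * ((m-1) * (lam*ξ)^(m-2) * lam) * lam) := by
    intro ξ hξ
    have hfac := rpow_factor_bound m lam hm hlam ξ hξ
    have hmm : (0:ℝ) ≤ m * (m-1) := by nlinarith
    have : (m*(m-1)) * (lam / (2:ℝ)^(m+1)) ≤ (m*(m-1)) * ((lam*ξ)^(m-2) * (lam*lam)) :=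
      mul_le_mul_of_nonneg_left hfac hmm
    calc D = |B| * ((m*(m-1)) * (lam / (2:ℝ)^(m+1))) := by rw [hDdef]; ring
      _ ≤ |B| * ((m*(m-1)) * ((lam*ξ)^(m-2) * (lam*lam))) :=
          mul_le_mul_of_nonneg_left this (abs_nonneg _)
      _ = |B| * (m * ((m-1) * (lam*ξ)^(m-2) * lam) * lam) := by ring
  rcases lt_or_gt_of_ne hB with hBneg | hBpos
  · -- B < 0 : Φ'' ≤ -D
    apply le_trans (vdc_amp_neg Φ Φ' Φ'' G G' (1/2) 2 (by norm_num) D hD hΦc hd1 hd2 hc2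
      ?_ (fun ξ _ => hdG ξ) hcG'.continuousOn Mg Mg' hMg hMg') ?_
    · intro ξ hξ
      have h := hΦ''bound ξ hξ
      have habs : |B| = -B := abs_of_neg hBneg
      rw [habs] at h
      rw [hΦ''def]
      simp only
      nlinarith [h]
    · norm_num
  · -- B > 0 : D ≤ Φ''
    apply le_trans (vdc_amp Φ Φ' Φ'' G G' (1/2) 2 (by norm_num) D hD hΦc hd1 hd2 hc2
      ?_ (fun ξ _ => hdG ξ) hcG'.continuousOn Mg Mg' hMg hMg') ?_
    · intro ξ hξ
      have h := hΦ''bound ξ hξ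
      rw [abs_of_pos hBpos] at h
      exact h
    · norm_num

set_option maxHeartbeats 1000000 in
theorem kernel_bound_timelike (m : ℝ) (hm : 1 < m) (ψ : ℝ → ℝ) (hψ : ContDiff ℝ (⊤ : ℕ∞) ψ)
    (hsupp : ∀ ξ, ψ ξ ≠ 0 → ξ ∈ Set.Ioo (-2:ℝ) (-1/2) ∪ Set.Ioo (1/2:ℝ) 2) :
    ∃ C : ℝ, 0 < C ∧ ∀ (lam q α : ℝ), 1 ≤ lam → 2 ≤ q → 0 < α → α ≤ 1 →
      ∀ (a x t θ x' t' θ' : ℝ),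
        θ ∈ Set.Icc a (a + lam ^ (-(q * min (1/4 : ℝ) (α/q) / α))) →
        θ' ∈ Set.Icc a (a + lam ^ (-(q * min (1/4 : ℝ) (α/q) / α))) →
        t ∈ Set.Ioo (-1:ℝ) 1 → t' ∈ Set.Ioo (-1:ℝ) 1 →
        2 * lam ^ (-(q * min (1/4 : ℝ) (α/q) / α)) < |x - x'| →
        |x - x'| ≤ 4 * |t - t'| →
        ‖lam • ∫ ξ : ℝ,
            Complex.exp (Complex.I *
              ((((x + t * θ) - (x' + t' * θ')) * (lam * ξ) + (t - t') * |lam * ξ| ^ m : ℝ) : ℂ)) *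
              ((ψ ξ ^ 2 : ℝ) : ℂ)‖ ≤
          C * lam * (lam * |x - x'|) ^ (-(1:ℝ)/2) := by
  -- amplitude functions and bounds
  have hψc : Continuous ψ := hψ.continuous
  have hψ'c : Continuous (deriv ψ) := hψ.continuous_deriv (by simp)
  have hψd : ∀ ξ, HasDerivAt ψ (deriv ψ ξ) ξ :=
    fun ξ => (hψ.differentiable (by simp) ξ).hasDerivAt
  set g : ℝ → ℝ := fun ξ => ψ ξ ^ 2 with hgdef
  set g' : ℝ → ℝ := fun ξ => 2 * ψ ξ * deriv ψ ξ with hg'def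
  have hgd : ∀ ξ, HasDerivAt g (g' ξ) ξ := by
    intro ξ
    have := (hψd ξ).pow 2
    refine this.congr_deriv ?_
    push_cast
    ring
  have hgc : Continuous g := hψc.pow 2
  have hg'c : Continuous g' := (continuous_const.mul hψc).mul hψ'c
  obtain ⟨M1, hM1⟩ := (isCompact_Icc (a := (-2:ℝ)) (b := 2)).exists_bound_of_continuousOn
    hgc.continuousOn
  obtain ⟨M2, hM2⟩ := (isCompact_Icc (a := (-2:ℝ)) (b := 2)).exists_bound_of_continuousOn
    hg'c.continuousOn
  set M : ℝ := max 1 (max M1 M2) with hMdef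
  have hM1' : ∀ ξ ∈ Icc (-2:ℝ) 2, |g ξ| ≤ M := fun ξ hξ =>
    le_trans (by simpa [Real.norm_eq_abs] using hM1 ξ hξ)
      ((le_max_left M1 M2).trans (le_max_right _ _))
  have hM2' : ∀ ξ ∈ Icc (-2:ℝ) 2, |g' ξ| ≤ M := fun ξ hξ =>
    le_trans (by simpa [Real.norm_eq_abs] using hM2 ξ hξ)
      ((le_max_right M1 M2).trans (le_max_right _ _))
  have hMpos : (1:ℝ) ≤ M := le_max_left _ _
  -- the constant
  set cm : ℝ := m * (m-1) / (2:ℝ)^(m+3) with hcmdef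
  have h2m3 : (0:ℝ) < (2:ℝ)^(m+3) := Real.rpow_pos_of_pos two_pos _
  have hcmpos : 0 < cm := by
    apply div_pos (mul_pos (by linarith) (by linarith)) h2m3
  refine ⟨50 * M / Real.sqrt cm, by positivity, ?_⟩
  intro lam q α hlam hq hα hα1 a x t θ x' t' θ' hθ hθ' ht ht' hxl hxt
  have hlampos : (0:ℝ) < lam := lt_of_lt_of_le one_pos hlam
  set A : ℝ := (x + t * θ) - (x' + t' * θ') with hAdef
  set B : ℝ := t - t' with hBdef
  have hxx : 0 < |x - x'| := by
    have := Real.rpow_pos_of_pos hlampos (-(q * min (1/4 : ℝ) (α/q) / α))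
    linarith
  have hBabs : |x - x'| / 4 ≤ |B| := by linarith
  have hBne : B ≠ 0 := by
    intro h
    rw [h] at hBabs
    simp at hBabs
    linarith
  set f : ℝ → ℂ := fun ξ => Complex.exp (Complex.I *
      ((A * (lam * ξ) + B * |lam * ξ| ^ m : ℝ) : ℂ)) * ((ψ ξ ^ 2 : ℝ) : ℂ) with hfdef
  -- continuity of f
  have hrpowc : Continuous (fun y : ℝ => y ^ m) := by
    rw [continuous_iff_continuousAt]
    exact fun y => Real.continuousAt_rpow_const y m (Or.inr (by linarith))
  have hphasec : Continuous (fun ξ : ℝ => A * (lam * ξ) + B * |lam * ξ| ^ m) := by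
    apply Continuous.add
    · exact continuous_const.mul (continuous_const.mul continuous_id)
    · exact continuous_const.mul
        (hrpowc.comp ((continuous_const.mul continuous_id).abs))
  have hfc : Continuous f := by
    apply Continuous.mul
    · exact Complex.continuous_exp.comp
        ((Complex.continuous_ofReal.comp hphasec).const_smul Complex.I)
    · exact Complex.continuous_ofReal.comp (hψc.pow 2)
  -- split the integral
  set s₁ : Set ℝ := Ioc (-2:ℝ) (-1/2) with hs1def
  set s₂ : Set ℝ := Ioc (1/2:ℝ) 2 with hs2def
  have hsupp' : Function.support f ⊆ s₁ ∪ s₂ := by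
    intro ξ hξ
    have hψne : ψ ξ ≠ 0 := by
      intro h
      apply hξ
      rw [hfdef]
      simp [h]
    rcases hsupp ξ hψne with h | h
    · exact Or.inl ⟨h.1, h.2.le⟩
    · exact Or.inr ⟨h.1, h.2.le⟩
  have hmeas1 : MeasurableSet s₁ := measurableSet_Ioc
  have hmeas2 : MeasurableSet s₂ := measurableSet_Ioc
  have hsplit : (∫ ξ : ℝ, f ξ) = (∫ ξ in s₁, f ξ) + ∫ ξ in s₂, f ξ := by
    have h0 : (∫ ξ : ℝ, f ξ) = ∫ ξ in s₁ ∪ s₂, f ξ := by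
      rw [← MeasureTheory.integral_indicator (hmeas1.union hmeas2)]
      congr 1
      exact (Set.indicator_eq_self.2 hsupp').symm
    rw [h0]
    apply MeasureTheory.setIntegral_union
    · rw [Set.disjoint_left]
      intro ξ h1 h2
      have := h1.2
      have := h2.1
      norm_num at *
      linarith
    · exact hmeas2
    · exact hfc.integrableOn_Ioc
    · exact hfc.integrableOn_Ioc
  have hi1 : (∫ ξ in s₁, f ξ) = ∫ ξ in (-2:ℝ)..(-1/2), f ξ :=
    (intervalIntegral.integral_of_le (by norm_num)).symm
  have hi2 : (∫ ξ in s₂, f ξ) = ∫ ξ in (1/2:ℝ)..2, f ξ :=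
    (intervalIntegral.integral_of_le (by norm_num)).symm
  -- positive piece
  set D0 : ℝ := |B| * (m*(m-1)) * (lam / (2:ℝ)^(m+1)) with hD0def
  have hpos_piece : ‖∫ ξ in (1/2:ℝ)..2, f ξ‖ ≤ 10 / Real.sqrt D0 * (M + (3/2) * M) := by
    have hcongr : (∫ ξ in (1/2:ℝ)..2, f ξ) = ∫ ξ in (1/2:ℝ)..2,
        Complex.exp (Complex.I * ((A * (lam * ξ) + B * (lam*ξ)^m : ℝ) : ℂ)) * ((g ξ : ℝ) : ℂ) := by
      apply intervalIntegral.integral_congr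
      intro ξ hξ
      rw [Set.uIcc_of_le (by norm_num : (1/2:ℝ) ≤ 2)] at hξ
      have : |lam * ξ| = lam * ξ := abs_of_pos (by nlinarith [hξ.1])
      rw [hfdef]
      simp only [this]
      rfl
    rw [hcongr]
    exact piece_bound m lam A B hm hlam hBne g g' hgd hg'c M M
      (fun ξ hξ => hM1' ξ ⟨by linarith [hξ.1], by linarith [hξ.2]⟩)
      (fun ξ hξ => hM2' ξ ⟨by linarith [hξ.1], by linarith [hξ.2]⟩)
  -- negative piece
  have hneg_piece : ‖∫ ξ in (-2:ℝ)..(-1/2:ℝ), f ξ‖ ≤ 10 / Real.sqrt D0 * (M + (3/2) * M) := by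
    have hcn : (∫ ξ in (1/2:ℝ)..2, f (-ξ)) = ∫ ξ in (-2:ℝ)..(-1/2:ℝ), f ξ := by
      have := intervalIntegral.integral_comp_neg (a := (1/2:ℝ)) (b := 2) (f := f)
      convert this using 2 <;> norm_num
    rw [← hcn]
    have hcongr : (∫ ξ in (1/2:ℝ)..2, f (-ξ)) = ∫ ξ in (1/2:ℝ)..2,
        Complex.exp (Complex.I * (((-A) * (lam * ξ) + B * (lam*ξ)^m : ℝ) : ℂ)) *
          ((g (-ξ) : ℝ) : ℂ) := by
      apply intervalIntegral.integral_congr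
      intro ξ hξ
      rw [Set.uIcc_of_le (by norm_num : (1/2:ℝ) ≤ 2)] at hξ
      have h1 : |lam * (-ξ)| = lam * ξ := by
        rw [mul_neg, abs_neg]
        exact abs_of_pos (by nlinarith [hξ.1])
      have harg : A * (lam * (-ξ)) + B * (lam*ξ)^m = (-A) * (lam * ξ) + B * (lam*ξ)^m := by
        ring
      rw [hfdef]
      simp only [h1, harg]
      rfl
    rw [hcongr]
    exact piece_bound m lam (-A) B hm hlam hBne (fun ξ => g (-ξ)) (fun ξ => g' (-ξ) * (-1))
      (fun ξ => (hgd (-ξ)).comp ξ (hasDerivAt_neg ξ))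
      ((hg'c.comp continuous_neg).mul continuous_const) M M
      (fun ξ hξ => hM1' (-ξ) ⟨by linarith [hξ.2], by linarith [hξ.1]⟩)
      (fun ξ hξ => by
        rw [abs_mul, abs_neg, abs_one, mul_one]
        exact hM2' (-ξ) ⟨by linarith [hξ.2], by linarith [hξ.1]⟩)
  -- compare D0 with cm * (lam * |x - x'|)
  have h2m1 : (0:ℝ) < (2:ℝ)^(m+1) := Real.rpow_pos_of_pos two_pos _
  have h22 : (2:ℝ) ^ (2:ℝ) = 4 := by
    norm_num
  have h2e : (2:ℝ)^(m+3) = (2:ℝ)^(m+1) * 4 := by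
    rw [show m+3 = (m+1)+2 by ring, Real.rpow_add two_pos, h22]
  have hDle : cm * (lam * |x - x'|) ≤ D0 := by
    have key : cm * (lam * |x - x'|) = (|x - x'|/4) * (m*(m-1)) * (lam / (2:ℝ)^(m+1)) := by
      rw [hcmdef, h2e]
      field_simp
    rw [key, hD0def]
    apply mul_le_mul_of_nonneg_right _ (by positivity)
    apply mul_le_mul_of_nonneg_right hBabs (mul_nonneg (by linarith) (by linarith))
  have hDpos : 0 < cm * (lam * |x - x'|) := by positivity
  have hD0pos : 0 < D0 := lt_of_lt_of_le hDpos hDle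
  have hsqle : 10 / Real.sqrt D0 ≤ 10 / (Real.sqrt cm * Real.sqrt (lam * |x - x'|)) := by
    rw [← Real.sqrt_mul hcmpos.le]
    apply div_le_div_of_nonneg_left (by norm_num) (Real.sqrt_pos.2 hDpos)
    exact Real.sqrt_le_sqrt hDle
  -- final assembly
  have hnorm : ‖∫ ξ : ℝ, f ξ‖ ≤ 2 * (10 / Real.sqrt D0) * (M + (3/2) * M) := by
    rw [hsplit, hi1, hi2]
    calc ‖(∫ ξ in (-2:ℝ)..(-1/2:ℝ), f ξ) + ∫ ξ in (1/2:ℝ)..2, f ξ‖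
        ≤ ‖∫ ξ in (-2:ℝ)..(-1/2:ℝ), f ξ‖ + ‖∫ ξ in (1/2:ℝ)..2, f ξ‖ := norm_add_le _ _
      _ ≤ 10 / Real.sqrt D0 * (M + (3/2) * M) + 10 / Real.sqrt D0 * (M + (3/2) * M) :=
          add_le_add hneg_piece hpos_piece
      _ = 2 * (10 / Real.sqrt D0) * (M + (3/2) * M) := by ring
  have hM52 : (0:ℝ) ≤ M + (3/2) * M := by linarith
  have hnorm2 : ‖∫ ξ : ℝ, f ξ‖ ≤
      (50 * M / Real.sqrt cm) * (Real.sqrt (lam * |x - x'|))⁻¹ := by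
    refine hnorm.trans ?_
    have step : 2 * (10 / Real.sqrt D0) * (M + (3/2) * M) ≤
        2 * (10 / (Real.sqrt cm * Real.sqrt (lam * |x - x'|))) * (M + (3/2) * M) := by
      apply mul_le_mul_of_nonneg_right _ hM52
      apply mul_le_mul_of_nonneg_left hsqle (by norm_num)
    refine step.trans (le_of_eq ?_)
    have hscm : (0:ℝ) < Real.sqrt cm := Real.sqrt_pos.2 hcmpos
    have hsprod : (0:ℝ) < Real.sqrt (lam * |x - x'|) := Real.sqrt_pos.2 (by positivity)
    rw [div_eq_mul_inv, div_eq_mul_inv, mul_inv]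
    ring
  -- rewrite the goal
  have hrpow : (lam * |x - x'|) ^ (-(1:ℝ)/2) = (Real.sqrt (lam * |x - x'|))⁻¹ := by
    rw [neg_div, Real.rpow_neg (by positivity), Real.sqrt_eq_rpow]
  rw [norm_smul, Real.norm_eq_abs, abs_of_pos hlampos, hrpow]
  calc lam * ‖∫ ξ : ℝ, f ξ‖
      ≤ lam * ((50 * M / Real.sqrt cm) * (Real.sqrt (lam * |x - x'|))⁻¹) :=
        mul_le_mul_of_nonneg_left hnorm2 hlampos.le
    _ = 50 * M / Real.sqrt cm * lam * (Real.sqrt (lam * |x - x'|))⁻¹ := by ring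
end
end
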